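/- arXiv:1503.08519 — 7 statements merged into one kernel-verified Lean document; each statement's English description precedes it below -/
import Mathlib

section
/- Let A be a C*-algebra, y ∈ A, δ > 0, and let v|y| = y be the polar decomposition of y in the enveloping von Neumann algebra A**. Define φ(t) := min(1, (2/δ)·max(t - δ/2, 0)) and q := φ(yy*)v. Then q ∈ A, q is a contraction, and for every μ ≥ δ one has q*(yy* - μ)₊ q = (y*y - μ)₊. -/
/-!
Since `φ` vanishes near `0`, `φ(yy*) = k(yy*) yy*` with `k(t) = φ(t)/t` continuous, so the
intertwining relation `y f(y*y) = f(yy*) y` gives `q = φ(yy*) v = y k(y*y) |y|`, which lies in `A`.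
The same computation shows `v* H(yy*) v = |y| (H/t)(y*y) |y| = H(y*y)` for every continuous `H`
vanishing near `0`. With `H = φ²` this bounds `‖q‖² = ‖q* q‖`, and with `H = (t - μ)₊`, on whose
support `φ = 1`, it gives `q* (yy* - μ)₊ q = v* (yy* - μ)₊ v = (y*y - μ)₊`.
-/

open Filter Topology
open scoped ContinuousMapZero

lemma ContinuousMapZero.mul_nonUnitalStarAlgHom_apply_eq {𝕜 A : Type*}
    [RCLike 𝕜] [NonUnitalSemiring A] [Star A] [TopologicalSpace A] [IsTopologicalSemiring A]
    [T2Space A] [Module 𝕜 A] [IsScalarTower 𝕜 A A] [SMulCommClass 𝕜 A A] {s : Set 𝕜}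
    [Fact (0 ∈ s)] [CompactSpace s] (φ ψ : C(s, 𝕜)₀ →⋆ₙₐ[𝕜] A) (x : A)
    (hφ : Continuous φ) (hψ : Continuous ψ) (hid : x * φ (.id s) = ψ (.id s) * x)
    (hstar_id : x * φ (star (.id s)) = ψ (star (.id s)) * x) (f : C(s, 𝕜)₀) :
    x * φ f = ψ f * x := by
  induction f using ContinuousMapZero.induction_on_of_compact with
  | zero => simp
  | id => exact hid
  | star_id => exact hstar_id
  | add _ _ hf hg => simp only [map_add, mul_add, add_mul, hf, hg]
  | mul _ _ hf hg => rw [map_mul, map_mul, ← mul_assoc, hf, mul_assoc, hg, mul_assoc]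
  | smul _ _ hf => rw [map_smul, map_smul, mul_smul_comm, smul_mul_assoc, hf]
  | frequently f hf => exact hf.mem_of_closed <| isClosed_eq (by fun_prop) (by fun_prop)

lemma Continuous.div_id_of_eventuallyEq_zero {H : ℝ → ℝ} (hH : Continuous H)
    (h0 : H =ᶠ[𝓝 0] 0) : Continuous fun t => H t / t := by
  refine continuous_iff_continuousAt.2 fun t => ?_
  rcases eq_or_ne t 0 with rfl | ht
  · exact (continuousAt_const (y := (0 : ℝ))).congr (h0.mono fun s hs => by simp [hs])
  · exact hH.continuousAt.div continuousAt_id ht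

lemma div_id_mul_id_of_eventuallyEq_zero {H : ℝ → ℝ} (h0 : H =ᶠ[𝓝 0] 0) (t : ℝ) :
    H t / t * t = H t :=
  div_mul_cancel_of_imp fun ht => by subst ht; exact h0.eq_of_nhds

section Polar

variable {M : Type*} [NonUnitalCStarAlgebra M]

lemma quasispectrum_star_mul_self_nonneg (y : M) : ∀ t ∈ quasispectrum ℝ (star y * y), 0 ≤ t := by
  intro t ht
  rw [Unitization.quasispectrum_eq_spectrum_inr' ℝ ℂ, Unitization.inr_mul,
    Unitization.inr_star] at ht
  exact spectrum_star_mul_self_nonneg t ht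

lemma mul_cfcₙ_star_mul_self (y : M) (f : ℝ → ℝ) :
    y * cfcₙ f (star y * y) = cfcₙ f (y * star y) * y := by
  have hσ : quasispectrum ℝ (star y * y) = quasispectrum ℝ (y * star y) :=
    quasispectrum.mul_comm _ _
  -- the quasispectra agree, so both sides take their junk value `0` together
  by_cases hf : ContinuousOn f (quasispectrum ℝ (y * star y))
  swap
  · rw [cfcₙ_apply_of_not_continuousOn _ hf, cfcₙ_apply_of_not_continuousOn _ (hσ ▸ hf),
      mul_zero, zero_mul]
  by_cases hf0 : f 0 = 0
  swap
  · rw [cfcₙ_apply_of_not_map_zero _ hf0, cfcₙ_apply_of_not_map_zero _ hf0, mul_zero, zero_mul]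
  have ha : IsSelfAdjoint (star y * y) := .star_mul_self y
  have hb : IsSelfAdjoint (y * star y) := .mul_star_self y
  let ι : C(quasispectrum ℝ (star y * y), quasispectrum ℝ (y * star y))₀ :=
    ⟨⟨Set.inclusion hσ.le, continuous_inclusion hσ.le⟩, rfl⟩
  have hid : y * cfcₙHom (R := ℝ) ha (.id _) = cfcₙHom (R := ℝ) hb (.id _) * y := by
    rw [cfcₙHom_id, cfcₙHom_id, mul_assoc]
  rw [cfcₙ_apply f _ (hσ ▸ hf) hf0, cfcₙ_apply f _ hf hf0]
  exact ContinuousMapZero.mul_nonUnitalStarAlgHom_apply_eq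
    ((cfcₙHom ha).comp (ContinuousMapZero.nonUnitalStarAlgHom_precomp ℝ ι)) (cfcₙHom hb) y
    ((cfcₙHom_continuous ha).comp (ContinuousMapZero.continuous_precomp ι))
    (cfcₙHom_continuous hb) hid (by rwa [star_trivial (ContinuousMapZero.id _)])
    ⟨⟨_, hf.domRestrict⟩, hf0⟩

variable {y v : M} {H : ℝ → ℝ}

lemma cfcₙ_mul_star_self_mul (hv : star v * y = cfcₙ Real.sqrt (star y * y))
    (hH : Continuous H) (h0 : H =ᶠ[𝓝 0] 0) :
    cfcₙ H (y * star y) * v =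
      y * cfcₙ (fun t => H t / t) (star y * y) * cfcₙ Real.sqrt (star y * y) := by
  have hk := hH.div_id_of_eventuallyEq_zero h0
  have hyv : star y * v = cfcₙ Real.sqrt (star y * y) := by
    simpa only [star_mul, star_star, (cfcₙ_predicate _ _ : IsSelfAdjoint _).star_eq]
      using congrArg star hv
  have hHk : cfcₙ H (y * star y) = cfcₙ (fun t => H t / t) (y * star y) * (y * star y) := by
    conv_lhs => rw [← funext (div_id_mul_id_of_eventuallyEq_zero h0)]
    rw [cfcₙ_mul (fun t => H t / t) (fun t => t) _ hk.continuousOn (by simp) continuousOn_id rfl,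
      cfcₙ_id' ℝ _ (.mul_star_self y)]
  rw [hHk, mul_assoc, mul_assoc, hyv, ← mul_assoc, ← mul_cfcₙ_star_mul_self, mul_assoc]

lemma star_mul_cfcₙ_mul_star_self_mul (hv : star v * y = cfcₙ Real.sqrt (star y * y))
    (hH : Continuous H) (h0 : H =ᶠ[𝓝 0] 0) :
    star v * cfcₙ H (y * star y) * v = cfcₙ H (star y * y) := by
  have hk := hH.div_id_of_eventuallyEq_zero h0
  have hsqrt := Real.continuous_sqrt
  rw [mul_assoc, cfcₙ_mul_star_self_mul hv hH h0, ← mul_assoc, ← mul_assoc, hv,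
    ← cfcₙ_mul _ _ _ hsqrt.continuousOn Real.sqrt_zero hk.continuousOn (by simp),
    ← cfcₙ_mul (fun t => √t * (H t / t)) _ _ (hsqrt.mul hk).continuousOn (by simp)
      hsqrt.continuousOn Real.sqrt_zero]
  refine cfcₙ_congr fun t ht => ?_
  have ht0 := quasispectrum_star_mul_self_nonneg y t ht
  rw [mul_right_comm, Real.mul_self_sqrt ht0, mul_comm]
  exact div_id_mul_id_of_eventuallyEq_zero h0 t

noncomputable def polarCutdown (φ : ℝ → ℝ) (y v : M) : M := cfcₙ φ (y * star y) * v

lemma star_polarCutdown (φ : ℝ → ℝ) (y v : M) :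
    star (polarCutdown φ y v) = star v * cfcₙ φ (y * star y) := by
  rw [polarCutdown, star_mul, (cfcₙ_predicate φ _ : IsSelfAdjoint _).star_eq]

lemma polarCutdown_mem {A : NonUnitalStarSubalgebra ℂ M} (hA : IsClosed (A : Set M))
    (hy : y ∈ A) (hv : star v * y = cfcₙ Real.sqrt (star y * y)) {φ : ℝ → ℝ}
    (hφ : Continuous φ) (hφ0 : φ =ᶠ[𝓝 0] 0) : polarCutdown φ y v ∈ A := by
  have ha : star y * y ∈ A := mul_mem (star_mem hy) hy
  rw [polarCutdown, cfcₙ_mul_star_self_mul hv hφ hφ0]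
  exact mul_mem (mul_mem hy (cfcₙ_mem (hs := hA) _ ha)) (cfcₙ_mem (hs := hA) _ ha)

lemma norm_polarCutdown_le_one (hv : star v * y = cfcₙ Real.sqrt (star y * y)) {φ : ℝ → ℝ}
    (hφ : Continuous φ) (hφ0 : φ =ᶠ[𝓝 0] 0) (hφ1 : ∀ t, |φ t| ≤ 1) :
    ‖polarCutdown φ y v‖ ≤ 1 := by
  have hφφ : star (polarCutdown φ y v) * polarCutdown φ y v =
      cfcₙ (fun t => φ t * φ t) (star y * y) := by
    rw [star_polarCutdown, polarCutdown, mul_assoc, ← mul_assoc (cfcₙ φ _),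
      ← cfcₙ_mul φ φ _ hφ.continuousOn hφ0.eq_of_nhds hφ.continuousOn hφ0.eq_of_nhds,
      ← mul_assoc]
    exact star_mul_cfcₙ_mul_star_self_mul hv (hφ.mul hφ) (hφ0.mono fun t ht => by simp [ht])
  have hle : ‖star (polarCutdown φ y v) * polarCutdown φ y v‖ ≤ 1 :=
    hφφ ▸ norm_cfcₙ_le fun t _ => by
      rw [Real.norm_eq_abs, abs_mul]
      exact mul_le_one₀ (hφ1 t) (abs_nonneg _) (hφ1 t)
  rw [CStarRing.norm_star_mul_self] at hle
  nlinarith [norm_nonneg (polarCutdown φ y v)]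

lemma star_polarCutdown_mul_cfcₙ_mul_polarCutdown
    (hv : star v * y = cfcₙ Real.sqrt (star y * y)) {φ F : ℝ → ℝ} (hφ : Continuous φ)
    (hφ0 : φ 0 = 0) (hF : Continuous F) (hF0 : F =ᶠ[𝓝 0] 0) (hφF : ∀ t, F t ≠ 0 → φ t = 1) :
    star (polarCutdown φ y v) * cfcₙ F (y * star y) * polarCutdown φ y v =
      cfcₙ F (star y * y) := by
  have hφFφ : (fun t => φ t * F t * φ t) = F := funext fun t => by
    by_cases ht : F t = 0
    · simp [ht]
    · simp [hφF t ht]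
  calc star (polarCutdown φ y v) * cfcₙ F (y * star y) * polarCutdown φ y v
      = star v * (cfcₙ φ (y * star y) * cfcₙ F (y * star y) * cfcₙ φ (y * star y)) * v := by
        rw [star_polarCutdown, polarCutdown]
        simp only [mul_assoc]
    _ = star v * cfcₙ F (y * star y) * v := by
        rw [← cfcₙ_mul φ F _ hφ.continuousOn hφ0 hF.continuousOn hF0.eq_of_nhds,
          ← cfcₙ_mul (fun t => φ t * F t) φ _ (hφ.mul hF).continuousOn (by simp [hφ0])
            hφ.continuousOn hφ0, hφFφ]
    _ = cfcₙ F (star y * y) := star_mul_cfcₙ_mul_star_self_mul hv hF hF0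

end Polar

noncomputable def rampCutoff (δ t : ℝ) : ℝ := min 1 ((2 / δ) * max (t - δ / 2) 0)

lemma continuous_rampCutoff (δ : ℝ) : Continuous (rampCutoff δ) := by
  unfold rampCutoff
  fun_prop

lemma rampCutoff_eventuallyEq_zero {δ : ℝ} (hδ : 0 < δ) : rampCutoff δ =ᶠ[𝓝 0] 0 := by
  filter_upwards [Iio_mem_nhds (half_pos hδ)] with t (ht : t < δ / 2)
  simp [rampCutoff, ht.le]

lemma rampCutoff_eq_one {δ t : ℝ} (hδ : 0 < δ) (ht : δ ≤ t) : rampCutoff δ t = 1 := by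
  refine min_eq_left ?_
  rw [max_eq_left (by linarith), div_mul_eq_mul_div, le_div_iff₀ hδ]
  linarith

lemma abs_rampCutoff_le_one {δ : ℝ} (hδ : 0 < δ) (t : ℝ) : |rampCutoff δ t| ≤ 1 := by
  have : 0 ≤ rampCutoff δ t := le_min zero_le_one (by positivity)
  rw [abs_of_nonneg this]
  exact min_le_left _ _

theorem polar_cutdown_transfer_general {M : Type*} [NonUnitalCStarAlgebra M]
    (A : NonUnitalStarSubalgebra ℂ M) (hA : IsClosed (A : Set M))
    (y : M) (hy : y ∈ A) (δ : ℝ) (hδ : 0 < δ) (v : M)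
    (hv2 : star v * y = cfcₙ Real.sqrt (star y * y)) :
    cfcₙ (fun t : ℝ => min 1 ((2 / δ) * max (t - δ / 2) 0)) (y * star y) * v ∈ A ∧
    ‖cfcₙ (fun t : ℝ => min 1 ((2 / δ) * max (t - δ / 2) 0)) (y * star y) * v‖ ≤ 1 ∧
    ∀ μ : ℝ, δ ≤ μ →
      star (cfcₙ (fun t : ℝ => min 1 ((2 / δ) * max (t - δ / 2) 0)) (y * star y) * v) *
          cfcₙ (fun t : ℝ => max (t - μ) 0) (y * star y) *
          (cfcₙ (fun t : ℝ => min 1 ((2 / δ) * max (t - δ / 2) 0)) (y * star y) * v) =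
        cfcₙ (fun t : ℝ => max (t - μ) 0) (star y * y) := by
  have hφ := continuous_rampCutoff δ
  have hφ0 := rampCutoff_eventuallyEq_zero hδ
  refine ⟨polarCutdown_mem hA hy hv2 hφ hφ0,
    norm_polarCutdown_le_one hv2 hφ hφ0 (abs_rampCutoff_le_one hδ), fun μ hμ => ?_⟩
  refine star_polarCutdown_mul_cfcₙ_mul_polarCutdown hv2 hφ hφ0.eq_of_nhds (by fun_prop) ?_
    fun t ht => rampCutoff_eq_one hδ ?_
  · filter_upwards [Iio_mem_nhds (hδ.trans_le hμ)] with t (ht : t < μ)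
    simp [ht.le]
  · contrapose! ht
    exact max_eq_right (by linarith)

/-- Let `A` be a closed non-unital star-subalgebra of a C*-algebra `M` (playing the role
of the enveloping von Neumann algebra `A**`), `y ∈ A`, `δ > 0`, and let `v ∈ M` implement
the polar decomposition of `y`, i.e. `v * |y| = y` and `star v * y = |y|` where
`|y| = (star y * y)^(1/2)`.  With `φ(t) := min 1 ((2/δ) * (t - δ/2)₊)` and
`q := φ(y * star y) * v`, the element `q` lies in `A`, is a contraction, and
`star q * (y * star y - μ)₊ * q = (star y * y - μ)₊` for every `μ ≥ δ`. -/
theorem polar_cutdown_transfer {M : Type*} [NonUnitalCStarAlgebra M] [PartialOrder M]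
    [StarOrderedRing M] (A : NonUnitalStarSubalgebra ℂ M) (hA : IsClosed (A : Set M))
    (y : M) (hy : y ∈ A) (δ : ℝ) (hδ : 0 < δ) (v : M)
    (hv1 : v * cfcₙ Real.sqrt (star y * y) = y)
    (hv2 : star v * y = cfcₙ Real.sqrt (star y * y)) :
    cfcₙ (fun t : ℝ => min 1 ((2 / δ) * max (t - δ / 2) 0)) (y * star y) * v ∈ A ∧
    ‖cfcₙ (fun t : ℝ => min 1 ((2 / δ) * max (t - δ / 2) 0)) (y * star y) * v‖ ≤ 1 ∧
    ∀ μ : ℝ, δ ≤ μ →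
      star (cfcₙ (fun t : ℝ => min 1 ((2 / δ) * max (t - δ / 2) 0)) (y * star y) * v) *
          cfcₙ (fun t : ℝ => max (t - μ) 0) (y * star y) *
          (cfcₙ (fun t : ℝ => min 1 ((2 / δ) * max (t - δ / 2) 0)) (y * star y) * v) =
        cfcₙ (fun t : ℝ => max (t - μ) 0) (star y * y) :=
  polar_cutdown_transfer_general A hA y hy δ hδ v hv2
end

section
/- Let A be a C*-algebra, n ≥ 2, and [a_{ij}] ∈ Mₙ(A) a positive matrix. Then for all i ≠ j the off-diagonal entry a_{ij} lies in the closed linear span of a_{ii} A a_{jj}, and moreover a_{ij} = lim_{k→∞} b_i^{(k)} a_{ij} b_j^{(k)} where b_j^{(k)} := (a_{jj} + 1/k)^{-1/2} a_{jj}^{1/2} (computed in the unitization). -/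
/-!
If `star x * x ≤ a`, then, computing in the unitization,
`‖x - x f(a)‖² = ‖(1 - f(a)) x⋆x (1 - f(a))‖ ≤ ‖(1 - f(a)) a (1 - f(a))‖ = sup_{σ(a)} t (1 - f t)²`,
and this is at most `ε` both for `f t = (t + ε)^{-1/2} t^{1/2}` and for `f t = t² / (t + ε)²`.
Writing `M = C⋆C`, `M i j = ∑ₗ (C l i)⋆ (C l j)` with `(C l p)⋆ (C l p) ≤ M p p`, so
`f(M i i) M i j f(M j j) → M i j` as `ε → 0`. For the second choice `f(a) = a · a (a + ε)⁻²`
lies in `a A` and in `A a`, which puts `M i j` in the closed span of `M i i A M j j`.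
-/

open Filter Topology Set Unitization Matrix
open scoped CStarAlgebra

lemma mul_one_sub_sqrt_inv_add_mul_sqrt_sq_le {t ε : ℝ} (ht : 0 ≤ t) (hε : 0 < ε) :
    t * (1 - √((t + ε)⁻¹) * √t) ^ 2 ≤ ε := by
  have hs : √((t + ε)⁻¹) * √t = √(t / (t + ε)) := by
    rw [← Real.sqrt_mul (by positivity), inv_mul_eq_div]
  have hs0 : 0 ≤ t / (t + ε) := by positivity
  have hs1 : t / (t + ε) ≤ 1 := by rw [div_le_one (by positivity)]; linarith
  have hsqrt : t / (t + ε) ≤ √(t / (t + ε)) := Real.le_sqrt_of_sq_le (by nlinarith)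
  have hsub : 1 - t / (t + ε) = ε / (t + ε) := by field_simp; ring
  rw [hs]
  calc t * (1 - √(t / (t + ε))) ^ 2 ≤ t * (ε / (t + ε)) ^ 2 := by
        gcongr
        · linarith [Real.sqrt_le_one.mpr hs1]
        · linarith
    _ ≤ ε := by
        rw [div_pow, ← mul_div_assoc, div_le_iff₀ (by positivity)]
        nlinarith [mul_nonneg ht hε.le]

lemma mul_one_sub_mul_div_add_sq_sq_le {t ε : ℝ} (ht : 0 ≤ t) (hε : 0 < ε) :
    t * (1 - t * (t / (t + ε) ^ 2)) ^ 2 ≤ ε := by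
  have hsub : 1 - t * (t / (t + ε) ^ 2) = ε * (2 * t + ε) / (t + ε) ^ 2 := by
    field_simp; ring
  rw [hsub, div_pow, ← mul_div_assoc, div_le_iff₀ (by positivity)]
  have : 0 ≤ t ^ 4 + 2 * t ^ 2 * ε ^ 2 + 3 * t * ε ^ 3 + ε ^ 4 := by positivity
  nlinarith

lemma continuousOn_sqrt_inv_add_mul_sqrt {ε : ℝ} (hε : 0 < ε) :
    ContinuousOn (fun t : ℝ => √((t + ε)⁻¹) * √t) (Ici 0) :=
  (Real.continuous_sqrt.comp_continuousOn
    (ContinuousOn.inv₀ (f := fun t : ℝ => t + ε) (by fun_prop) fun t (ht : 0 ≤ t) => by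
      linarith)).mul
    Real.continuous_sqrt.continuousOn

lemma continuousOn_div_add_sq {ε : ℝ} (hε : 0 < ε) :
    ContinuousOn (fun t : ℝ => t / (t + ε) ^ 2) (Ici 0) :=
  continuousOn_id.div (by fun_prop) fun t (ht : 0 ≤ t) => pow_ne_zero 2 (by linarith)

section

variable {A : Type*} [NonUnitalCStarAlgebra A] [PartialOrder A] [StarOrderedRing A]

lemma norm_mul_sq_le_of_star_mul_self_le {x a : A} (hx : star x * x ≤ a) (u : A) :
    ‖x * u‖ ^ 2 ≤ ‖star u * a * u‖ := by
  have h : star (x * u) * (x * u) = star u * (star x * x) * u := by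
    simp only [star_mul, mul_assoc]
  rw [sq, ← CStarRing.norm_star_mul_self, h]
  exact CStarAlgebra.norm_le_norm_of_nonneg_of_le
    (star_left_conjugate_nonneg (star_mul_self_nonneg x) u) (star_left_conjugate_le_conjugate hx u)

lemma norm_sub_mul_cfcₙ_sq_le {a x : A} (hx : star x * x ≤ a) {f : ℝ → ℝ}
    (hf : ContinuousOn f (quasispectrum ℝ a)) (hf0 : f 0 = 0) {δ : ℝ}
    (hδ : ∀ t ∈ quasispectrum ℝ a, t * (1 - f t) ^ 2 ≤ δ) :
    ‖x - x * cfcₙ f a‖ ^ 2 ≤ δ := by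
  have ha : 0 ≤ a := (star_mul_self_nonneg x).trans hx
  have hsa : IsSelfAdjoint (a : A⁺¹) := isSelfAdjoint_inr.mpr ha.isSelfAdjoint
  have hδ0 : 0 ≤ δ := by simpa using hδ 0 (quasispectrum.zero_mem ℝ a)
  have hδ' : ∀ t ∈ quasispectrum ℝ a, ‖t * (1 - f t) ^ 2‖ ≤ δ := fun t ht => by
    rw [Real.norm_of_nonneg (by have := quasispectrum_nonneg_of_nonneg a ha t ht; positivity)]
    exact hδ t ht
  rw [quasispectrum_eq_spectrum_inr' ℝ ℂ a] at hf hδ'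
  have hg : ContinuousOn (fun t : ℝ => 1 - f t) (spectrum ℝ (a : A⁺¹)) := by fun_prop
  have h_inr : ((x - x * cfcₙ f a : A) : A⁺¹) = x * cfc (fun t : ℝ => 1 - f t) (a : A⁺¹) := by
    rw [inr_sub ℂ, inr_mul ℂ, real_cfcₙ_eq_cfc_inr a f,
      cfc_sub (fun _ : ℝ => 1) f _ (by fun_prop) hf, cfc_const_one ℝ (a : A⁺¹), mul_sub, mul_one]
  have h_conj : star (cfc (fun t : ℝ => 1 - f t) (a : A⁺¹)) * a *
      cfc (fun t : ℝ => 1 - f t) (a : A⁺¹) = cfc (fun t : ℝ => t * (1 - f t) ^ 2) (a : A⁺¹) := by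
    rw [(cfc_predicate _ _ : IsSelfAdjoint (cfc (fun t : ℝ => 1 - f t) (a : A⁺¹))).star_eq,
      cfc_congr (a := (a : A⁺¹)) fun t _ =>
        (by ring : t * (1 - f t) ^ 2 = (1 - f t) * t * (1 - f t)),
      cfc_mul (fun t : ℝ => (1 - f t) * t) _ _ (hg.mul continuousOn_id) hg,
      cfc_mul (fun t : ℝ => 1 - f t) (fun t => t) _ hg continuousOn_id, cfc_id' ℝ (a : A⁺¹)]
  have hxa : star (x : A⁺¹) * x ≤ a := by
    rwa [← inr_star, ← inr_mul ℂ, inr_le_iff _ _ (.star_mul_self x) ha.isSelfAdjoint]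
  calc ‖x - x * cfcₙ f a‖ ^ 2 = ‖(x : A⁺¹) * cfc (fun t : ℝ => 1 - f t) (a : A⁺¹)‖ ^ 2 := by
        rw [← h_inr, norm_inr]
    _ ≤ _ := norm_mul_sq_le_of_star_mul_self_le hxa _
    _ ≤ δ := h_conj ▸ norm_cfc_le hδ0 hδ'

lemma tendsto_mul_cfcₙ_of_star_mul_self_le {ι : Type*} {l : Filter ι} {a x : A}
    (hx : star x * x ≤ a) {f : ι → ℝ → ℝ} {δ : ι → ℝ} (hδ : Tendsto δ l (𝓝 0))
    (hf : ∀ᶠ k in l, ContinuousOn (f k) (quasispectrum ℝ a) ∧ f k 0 = 0 ∧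
      ∀ t ∈ quasispectrum ℝ a, t * (1 - f k t) ^ 2 ≤ δ k) :
    Tendsto (fun k => x * cfcₙ (f k) a) l (𝓝 x) := by
  rw [tendsto_iff_norm_sub_tendsto_zero]
  refine squeeze_zero' (.of_forall fun k => norm_nonneg _) ?_ (by simpa using hδ.sqrt)
  filter_upwards [hf] with k ⟨hfc, hf0, hfδ⟩
  rw [norm_sub_rev]
  exact Real.le_sqrt_of_sq_le (norm_sub_mul_cfcₙ_sq_le hx hfc hf0 hfδ)

lemma tendsto_mul_cfcₙ_sqrt_inv_add_mul_sqrt {a x : A} (hx : star x * x ≤ a) :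
    Tendsto (fun ε : ℝ => x * cfcₙ (fun t => √((t + ε)⁻¹) * √t) a) (𝓝[>] 0) (𝓝 x) := by
  have hσ : quasispectrum ℝ a ⊆ Ici 0 :=
    fun t => quasispectrum_nonneg_of_nonneg a ((star_mul_self_nonneg x).trans hx) t
  refine tendsto_mul_cfcₙ_of_star_mul_self_le hx (δ := id) nhdsWithin_le_nhds ?_
  filter_upwards [self_mem_nhdsWithin] with ε (hε : 0 < ε)
  exact ⟨(continuousOn_sqrt_inv_add_mul_sqrt hε).mono hσ, by simp,
    fun t ht => mul_one_sub_sqrt_inv_add_mul_sqrt_sq_le (hσ ht) hε⟩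

lemma tendsto_mul_cfcₙ_mul_div_add_sq {a x : A} (hx : star x * x ≤ a) :
    Tendsto (fun ε : ℝ => x * cfcₙ (fun t => t * (t / (t + ε) ^ 2)) a) (𝓝[>] 0) (𝓝 x) := by
  have hσ : quasispectrum ℝ a ⊆ Ici 0 :=
    fun t => quasispectrum_nonneg_of_nonneg a ((star_mul_self_nonneg x).trans hx) t
  refine tendsto_mul_cfcₙ_of_star_mul_self_le hx (δ := id) nhdsWithin_le_nhds ?_
  filter_upwards [self_mem_nhdsWithin] with ε (hε : 0 < ε)
  exact ⟨(continuousOn_id.mul (continuousOn_div_add_sq hε)).mono hσ, by simp,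
    fun t ht => mul_one_sub_mul_div_add_sq_sq_le (hσ ht) hε⟩

lemma exists_cfcₙ_mul_div_add_sq_mul_mul_eq {a a' : A} (ha : 0 ≤ a) (ha' : 0 ≤ a') {ε : ℝ}
    (hε : 0 < ε) (x : A) :
    ∃ y, cfcₙ (fun t => t * (t / (t + ε) ^ 2)) a * x * cfcₙ (fun t => t * (t / (t + ε) ^ 2)) a' =
      a * y * a' := by
  have hσ : ∀ {b : A}, 0 ≤ b → quasispectrum ℝ b ⊆ Ici 0 :=
    fun hb t => quasispectrum_nonneg_of_nonneg _ hb t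
  refine ⟨cfcₙ (fun t => t / (t + ε) ^ 2) a * x * cfcₙ (fun t => t / (t + ε) ^ 2) a', ?_⟩
  rw [cfcₙ_mul (fun t : ℝ => t) _ a continuousOn_id rfl
      ((continuousOn_div_add_sq hε).mono (hσ ha)),
    cfcₙ_congr (a := a') fun t _ => mul_comm t (t / (t + ε) ^ 2),
    cfcₙ_mul _ (fun t : ℝ => t) a' ((continuousOn_div_add_sq hε).mono (hσ ha')) (by simp)
      continuousOn_id rfl,
    cfcₙ_id' ℝ a, cfcₙ_id' ℝ a']
  simp only [mul_assoc]

theorem Matrix.tendsto_mul_conjTranspose_mul_self_apply_mul {m n : Type*} [Fintype m]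
    {ι : Type*} {l : Filter ι} (C : Matrix m n A) (i j : n) {b b' : ι → A}
    (hb : ∀ k, IsSelfAdjoint (b k))
    (hbi : ∀ x, star x * x ≤ (Cᴴ * C) i i → Tendsto (fun k => x * b k) l (𝓝 x))
    (hbj : ∀ x, star x * x ≤ (Cᴴ * C) j j → Tendsto (fun k => x * b' k) l (𝓝 x)) :
    Tendsto (fun k => b k * (Cᴴ * C) i j * b' k) l (𝓝 ((Cᴴ * C) i j)) := by
  have hentry : ∀ p q, (Cᴴ * C) p q = ∑ r, star (C r p) * C r q := by
    simp [Matrix.mul_apply]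
  have hle : ∀ r p, star (C r p) * C r p ≤ (Cᴴ * C) p p := fun r p => by
    rw [hentry]
    exact Finset.single_le_sum (f := fun r => star (C r p) * C r p)
      (fun r _ => star_mul_self_nonneg _) (Finset.mem_univ r)
  have hleft : ∀ r, Tendsto (fun k => b k * star (C r i)) l (𝓝 (star (C r i))) := fun r => by
    simpa only [star_mul, (hb _).star_eq, star_star] using (hbi _ (hle r i)).star
  rw [hentry]
  simpa only [Finset.mul_sum, Finset.sum_mul, mul_assoc] using
    tendsto_finsetSum _ fun r _ => (hleft r).mul (hbj _ (hle r j))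

end

theorem matrix_pos_offdiag_general {A : Type*} [NonUnitalCStarAlgebra A] [PartialOrder A]
    [StarOrderedRing A] {n : ℕ} (M : Matrix (Fin n) (Fin n) A)
    (hM : ∃ C : Matrix (Fin n) (Fin n) A, M = Cᴴ * C) (i j : Fin n) :
    M i j ∈ closure (Submodule.span ℂ {x : A | ∃ y : A, x = M i i * y * M j j} : Set A) ∧
    Tendsto
      (fun k : ℕ =>
        cfcₙ (fun t : ℝ => Real.sqrt ((t + (k : ℝ)⁻¹)⁻¹) * Real.sqrt t) (M i i) * M i j *
          cfcₙ (fun t : ℝ => Real.sqrt ((t + (k : ℝ)⁻¹)⁻¹) * Real.sqrt t) (M j j))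
      atTop (nhds (M i j)) := by
  obtain ⟨C, rfl⟩ := hM
  have hdiag : ∀ p, 0 ≤ (Cᴴ * C) p p := fun p => by
    simpa [Matrix.mul_apply] using Finset.sum_nonneg fun r _ => star_mul_self_nonneg (C r p)
  have hG := C.tendsto_mul_conjTranspose_mul_self_apply_mul i j (fun _ => cfcₙ_predicate _ _)
    (fun _ => tendsto_mul_cfcₙ_mul_div_add_sq) (fun _ => tendsto_mul_cfcₙ_mul_div_add_sq)
  have hk : Tendsto (fun k : ℕ => (k : ℝ)⁻¹) atTop (𝓝[>] 0) :=
    tendsto_inv_atTop_nhdsGT_zero.comp tendsto_natCast_atTop_atTop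
  refine ⟨mem_closure_of_tendsto hG ?_, C.tendsto_mul_conjTranspose_mul_self_apply_mul i j
    (fun _ => cfcₙ_predicate _ _) (fun _ hx => (tendsto_mul_cfcₙ_sqrt_inv_add_mul_sqrt hx).comp hk)
    (fun _ hx => (tendsto_mul_cfcₙ_sqrt_inv_add_mul_sqrt hx).comp hk)⟩
  filter_upwards [self_mem_nhdsWithin] with ε (hε : 0 < ε)
  obtain ⟨y, hy⟩ := exists_cfcₙ_mul_div_add_sq_mul_mul_eq (hdiag i) (hdiag j) hε ((Cᴴ * C) i j)
  exact Submodule.subset_span ⟨y, hy⟩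

open Matrix Filter in
/-- If `[a i j]` is a positive `n × n` matrix over a C*-algebra `A` (i.e. of the form
`Cᴴ * C`), then each off-diagonal entry `a i j` lies in the closed linear span of
`a i i * A * a j j`, and `a i j = lim_k b i k * (a i j) * b j k` where
`b j k = (a j j + 1/k)^{-1/2} * (a j j)^{1/2}` is given by functional calculus. -/
theorem matrix_pos_offdiag {A : Type*} [NonUnitalCStarAlgebra A] [PartialOrder A]
    [StarOrderedRing A] {n : ℕ} (hn : 2 ≤ n) (M : Matrix (Fin n) (Fin n) A)
    (hM : ∃ C : Matrix (Fin n) (Fin n) A, M = Cᴴ * C) (i j : Fin n) (hij : i ≠ j) :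
    M i j ∈ closure (Submodule.span ℂ {x : A | ∃ y : A, x = M i i * y * M j j} : Set A) ∧
    Tendsto
      (fun k : ℕ =>
        cfcₙ (fun t : ℝ => Real.sqrt ((t + (k : ℝ)⁻¹)⁻¹) * Real.sqrt t) (M i i) * M i j *
          cfcₙ (fun t : ℝ => Real.sqrt ((t + (k : ℝ)⁻¹)⁻¹) * Real.sqrt t) (M j j))
      atTop (nhds (M i j)) :=
  matrix_pos_offdiag_general M hM i j
end

section
/- Let γ ≥ 1, n ∈ ℕ with n ≥ 1, and t > 0 with ntγ ≥ 1. With D(s) := γ·s, define ν₀ := nt and ν_{k+1} := D(ν_k)·ν_k = γ·ν_k². Then ν_k = (ntγ)^{2^k}/γ for all k ≥ 0, the n-tuple (ε₁, ..., εₙ) with ε_k := 1/ν_{n-k} satisfies εₙ + Σ_{k=1}^{n-1} ε_k·D(1/ε_{k+1})·...·D(1/εₙ) = 1/t, and D(1/ε₁)·...·D(1/εₙ) = ν₀·ν₁·...·ν_{n-1}·γⁿ ≤ (ntγ)^{2ⁿ - 1}. -/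
/-- The recursion `ν₀ = n·t`, `ν_{k+1} = γ·ν_k²` used to control iterated
diagonalization constants, with `D(s) = γ·s`. -/
def nuSeq (n : ℕ) (t γ : ℝ) : ℕ → ℝ
  | 0 => n * t
  | k + 1 => γ * (nuSeq n t γ k) ^ 2

lemma sum_exp_aux (k n : ℕ) (hk : k ≤ n) :
    ∑ j ∈ Finset.Icc (k+1) n, 2^(n-j) = 2^(n-k) - 1 := by
  have : ∑ j ∈ Finset.Icc (k+1) n, 2^(n-j) = ∑ i ∈ Finset.range (n-k), 2^i := by
    refine Finset.sum_nbij' (fun j => n - j) (fun i => n - i) ?_ ?_ ?_ ?_ ?_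
    · intro a ha; simp only [Finset.mem_Icc] at ha; simp only [Finset.mem_range]; omega
    · intro a ha; simp only [Finset.mem_range] at ha; simp only [Finset.mem_Icc]; omega
    · intro a ha; simp only [Finset.mem_Icc] at ha; show n - (n - a) = a; omega
    · intro a ha; simp only [Finset.mem_range] at ha; show n - (n - a) = a; omega
    · intro a ha; rfl
  rw [this]
  induction (n - k) with
  | zero => simp
  | succ m ih => rw [Finset.sum_range_succ, ih]; have := Nat.one_le_two_pow (n := m); ring_nf; omega


open Finset in
/-- With `D(s) := γ·s`, `ν₀ := n·t`, `ν_{k+1} := γ·ν_k²` and `ε_k := 1/ν_{n-k}`: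
(1) `ν_k = (ntγ)^{2^k}/γ`; (2) the telescoping budget
`ε_n + Σ_{k=1}^{n-1} ε_k · D(1/ε_{k+1}) ⋯ D(1/ε_n) = 1/t`; and (3)
`D(1/ε₁) ⋯ D(1/ε_n) = ν₀ ⋯ ν_{n-1} · γⁿ ≤ (ntγ)^{2ⁿ - 1}`. -/
theorem nuSeq_control (γ : ℝ) (hγ : 1 ≤ γ) (n : ℕ) (hn : 1 ≤ n) (t : ℝ) (ht : 0 < t)
    (hntγ : 1 ≤ n * t * γ) :
    (∀ k : ℕ, nuSeq n t γ k = (n * t * γ) ^ (2 ^ k) / γ) ∧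
    ((nuSeq n t γ (n - n))⁻¹ +
        ∑ k ∈ Finset.Icc 1 (n - 1),
          (nuSeq n t γ (n - k))⁻¹ * ∏ j ∈ Finset.Icc (k + 1) n, γ * nuSeq n t γ (n - j)
      = 1 / t) ∧
    (∏ k ∈ Finset.Icc 1 n, γ * nuSeq n t γ (n - k)
        = (∏ i ∈ Finset.range n, nuSeq n t γ i) * γ ^ n ∧
      ∏ k ∈ Finset.Icc 1 n, γ * nuSeq n t γ (n - k) ≤ (n * t * γ) ^ (2 ^ n - 1)) := by
  set A : ℝ := n * t * γ with hA
  have hγ0 : (0:ℝ) < γ := lt_of_lt_of_le one_pos hγ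
  have hA0 : (0:ℝ) < A := lt_of_lt_of_le one_pos hntγ
  have hform : ∀ k : ℕ, nuSeq n t γ k = A ^ (2 ^ k) / γ := by
    intro k
    induction k with
    | zero =>
      show (n:ℝ) * t = A ^ (2 ^ 0) / γ
      rw [pow_zero, pow_one, hA]
      field_simp
    | succ m ih =>
      rw [nuSeq, ih]
      rw [div_pow, pow_two, ← pow_add, pow_succ]
      field_simp
      ring
  -- key: γ * ν_{n-j} = A ^ (2^(n-j))
  have hDν : ∀ j : ℕ, γ * nuSeq n t γ (n - j) = A ^ (2 ^ (n - j)) := by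
    intro j; rw [hform]; field_simp
  have hprod : ∀ k : ℕ, k ≤ n →
      ∏ j ∈ Finset.Icc (k+1) n, γ * nuSeq n t γ (n - j) = A ^ (2 ^ (n - k) - 1) := by
    intro k hk
    calc ∏ j ∈ Finset.Icc (k+1) n, γ * nuSeq n t γ (n - j)
        = ∏ j ∈ Finset.Icc (k+1) n, A ^ (2 ^ (n - j)) := by
          exact Finset.prod_congr rfl (fun j _ => hDν j)
      _ = A ^ (∑ j ∈ Finset.Icc (k+1) n, 2 ^ (n - j)) := by
          rw [Finset.prod_pow_eq_pow_sum]
      _ = A ^ (2 ^ (n - k) - 1) := by rw [sum_exp_aux k n hk]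
  refine ⟨hform, ?_, ?_, ?_⟩
  · -- telescoping budget
    have hterm : ∀ k ∈ Finset.Icc 1 (n-1),
        (nuSeq n t γ (n - k))⁻¹ * ∏ j ∈ Finset.Icc (k + 1) n, γ * nuSeq n t γ (n - j)
          = γ / A := by
      intro k hk
      simp only [Finset.mem_Icc] at hk
      rw [hprod k (by omega), hform]
      have h1 : 1 ≤ 2 ^ (n - k) := Nat.one_le_two_pow
      have : A ^ (2 ^ (n - k) - 1) * A = A ^ (2 ^ (n - k)) := by
        rw [← pow_succ, Nat.sub_add_cancel h1]
      field_simp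
      exact this
    rw [Finset.sum_congr rfl hterm, Finset.sum_const, Nat.card_Icc]
    have hnn : n - n = 0 := Nat.sub_self n
    rw [hnn, hform 0, nsmul_eq_mul]
    have hc : ((n - 1 + 1 - 1 : ℕ) : ℝ) = (n : ℝ) - 1 := by
      rw [Nat.sub_add_cancel hn, Nat.cast_sub hn, Nat.cast_one]
    rw [hc, pow_zero, pow_one, hA]
    have hne : (n:ℝ) * t * γ ≠ 0 := by rw [← hA]; exact ne_of_gt hA0
    have hγne : γ ≠ 0 := ne_of_gt hγ0
    have htne : (t:ℝ) ≠ 0 := ne_of_gt ht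
    field_simp
    ring
  · -- product equality
    have : ∏ k ∈ Finset.Icc 1 n, nuSeq n t γ (n - k) = ∏ i ∈ Finset.range n, nuSeq n t γ i := by
      refine Finset.prod_nbij' (fun k => n - k) (fun i => n - i) ?_ ?_ ?_ ?_ ?_
      · intro a ha; simp only [Finset.mem_Icc] at ha; simp only [Finset.mem_range]; omega
      · intro a ha; simp only [Finset.mem_range] at ha; simp only [Finset.mem_Icc]; omega
      · intro a ha; simp only [Finset.mem_Icc] at ha; show n - (n - a) = a; omega
      · intro a ha; simp only [Finset.mem_range] at ha; show n - (n - a) = a; omega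
      · intro a ha; rfl
    rw [Finset.prod_mul_distrib, this, Finset.prod_const, Nat.card_Icc,
      Nat.add_sub_cancel, mul_comm]
  · have := hprod 0 (Nat.zero_le n)
    simp only [Nat.sub_zero, zero_add] at this
    rw [this]
end

section
/- Let B be a C*-algebra, A ⊆ B a C*-subalgebra, and F ⊆ A₊. If F is a filling family for A and A₊ is a filling family for B, then F is a filling family for B. -/
variable {B : Type*} [NonUnitalCStarAlgebra B] [PartialOrder B] [StarOrderedRing B]

/-- `F` is a filling family for the C*-algebra given by the subset `S ⊆ B`
(with operations inherited from `B`): for every hereditary C*-subalgebra `D` of `S`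
and every closed two-sided ideal `I` of `S` with `D ⊄ I`, there is `z ∈ S` with
`star z * z ∈ D`, `z * star z ∈ F` and `z * star z ∉ I`. -/
def IsFillingIn (S F : Set B) : Prop :=
  ∀ D : Set B, D ⊆ S → (0 : B) ∈ D →
    (∀ x ∈ D, ∀ y ∈ D, x + y ∈ D) →
    (∀ (c : ℂ), ∀ x ∈ D, c • x ∈ D) →
    (∀ x ∈ D, ∀ y ∈ D, x * y ∈ D) →
    (∀ x ∈ D, star x ∈ D) →
    IsClosed D →
    (∀ a ∈ S, ∀ d ∈ D, 0 ≤ a → a ≤ d → a ∈ D) →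
  ∀ I : Set B, I ⊆ S → (0 : B) ∈ I →
    (∀ x ∈ I, ∀ y ∈ I, x + y ∈ I) →
    (∀ (c : ℂ), ∀ x ∈ I, c • x ∈ I) →
    (∀ a ∈ S, ∀ x ∈ I, a * x ∈ I) →
    (∀ a ∈ S, ∀ x ∈ I, x * a ∈ I) →
    IsClosed I →
  ¬ D ⊆ I →
  ∃ z ∈ S, star z * z ∈ D ∧ z * star z ∈ F ∧ z * star z ∉ I

/-!
Given `D ⊄ I`, filling by `A₊` yields `z` with `z⋆z ∈ D` and `a = zz⋆ ∈ A₊ \ I`. With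
`eₙ = fₙ(a)`, `fₙ(t) = (n+1)t / (1+(n+1)t)`, the elements `x` with `eₙ x eₙ → x` form a closed
hereditary ⋆-subalgebra of `B` containing `a`. Filling by `F` inside `A`, applied to its trace on
`A` and to `A ∩ I`, yields `w ∈ A` with `w⋆w` in it, hence `w eₙ → w`, and `ww⋆ ∈ F \ I`.

Instead of a polar decomposition in `B**`, take `cₙ = gₙ(a)`, `gₙ(t) = (n+1)√t / (1+(n+1)t)`, so
that `cₙ a cₘ = eₙ eₘ`. Then `uₙ = w cₙ z` satisfies `uₙ uₘ⋆ = (w eₙ)(w eₘ)⋆`, so it is Cauchy and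
its limit `z'` has `z'z'⋆ = ww⋆`, while `uₙ⋆uₙ ≤ ‖w⋆w‖ (n+1)² (z⋆z)²` keeps `z'⋆z'` in `D`.
-/

open Filter Topology

-- The `|t|` only makes these continuous on all of `ℝ`; they are evaluated at `t ≥ 0`.
noncomputable def approxUnitFun (r t : ℝ) : ℝ := r * t / (1 + r * |t|)

noncomputable def approxUnitSqrtFun (r t : ℝ) : ℝ := r * √t / (1 + r * |t|)

section ApproxUnitFun

variable {r s t : ℝ}

lemma continuous_approxUnitFun (hr : 0 ≤ r) : Continuous (approxUnitFun r) :=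
  (continuous_const.mul continuous_id).div
    (continuous_const.add (continuous_const.mul continuous_abs))
    fun t => (by positivity : 0 < 1 + r * |t|).ne'

lemma continuous_approxUnitSqrtFun (hr : 0 ≤ r) : Continuous (approxUnitSqrtFun r) :=
  (continuous_const.mul Real.continuous_sqrt).div
    (continuous_const.add (continuous_const.mul continuous_abs))
    fun t => (by positivity : 0 < 1 + r * |t|).ne'

@[simp] lemma approxUnitFun_zero (r : ℝ) : approxUnitFun r 0 = 0 := by simp [approxUnitFun]

@[simp] lemma approxUnitSqrtFun_zero (r : ℝ) : approxUnitSqrtFun r 0 = 0 := by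
  simp [approxUnitSqrtFun]

lemma abs_approxUnitFun_le_one (hr : 0 ≤ r) (t : ℝ) : |approxUnitFun r t| ≤ 1 := by
  have hd : 0 < 1 + r * |t| := by positivity
  rw [approxUnitFun, abs_div, abs_of_pos hd, div_le_one hd, abs_mul, abs_of_nonneg hr]
  linarith

lemma abs_sub_approxUnitFun_mul_self_le (hr : 0 < r) (ht : 0 ≤ t) :
    |t - approxUnitFun r t * t| ≤ 1 / r := by
  have hd : 0 < 1 + r * t := by positivity
  have h : t - approxUnitFun r t * t = t / (1 + r * t) := by
    rw [approxUnitFun, abs_of_nonneg ht]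
    field_simp
    ring
  rw [h, abs_of_nonneg (by positivity), div_le_div_iff₀ hd hr]
  linarith

lemma abs_sub_approxUnitFun_mul_le (hr : 0 < r) (hs : 0 ≤ s) (ht : 0 ≤ t) :
    |approxUnitFun s t - approxUnitFun r t * approxUnitFun s t| ≤ s / r := by
  have hdr : 0 < 1 + r * t := by positivity
  have hds : 0 < 1 + s * t := by positivity
  have h : approxUnitFun s t - approxUnitFun r t * approxUnitFun s t
      = s * t / ((1 + s * t) * (1 + r * t)) := by
    rw [approxUnitFun, approxUnitFun, abs_of_nonneg ht]
    field_simp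
    ring
  rw [h, abs_of_nonneg (by positivity), div_le_div_iff₀ (by positivity) hr]
  nlinarith [mul_nonneg (mul_nonneg hs ht) (mul_nonneg hs ht), mul_nonneg (mul_nonneg hs ht) hr.le,
    mul_nonneg (mul_nonneg (mul_nonneg hs ht) (mul_nonneg hs ht)) hr.le]

lemma approxUnitSqrtFun_mul_mul (hr : 0 ≤ r) (hs : 0 ≤ s) (ht : 0 ≤ t) :
    approxUnitSqrtFun r t * (t * approxUnitSqrtFun s t) =
      approxUnitFun r t * approxUnitFun s t := by
  have hdr : 0 < 1 + r * t := by positivity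
  have hds : 0 < 1 + s * t := by positivity
  rw [approxUnitSqrtFun, approxUnitSqrtFun, approxUnitFun, approxUnitFun, abs_of_nonneg ht]
  field_simp
  linear_combination r * s * t * Real.sq_sqrt ht

lemma approxUnitSqrtFun_mul_self_le (hr : 0 ≤ r) (ht : 0 ≤ t) :
    approxUnitSqrtFun r t * approxUnitSqrtFun r t ≤ r ^ 2 * t := by
  have hd : 1 ≤ 1 + r * t := by nlinarith [mul_nonneg hr ht]
  have h : approxUnitSqrtFun r t * approxUnitSqrtFun r t = r ^ 2 * t / (1 + r * t) ^ 2 := by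
    rw [approxUnitSqrtFun, abs_of_nonneg ht, div_mul_div_comm]
    congr 1
    · linear_combination r ^ 2 * Real.mul_self_sqrt ht
    · ring
  rw [h]
  exact div_le_self (by positivity) (one_le_pow₀ hd)

end ApproxUnitFun

section ApproxUnit

variable {C : Type*} [NonUnitalCStarAlgebra C]

noncomputable def approxUnit (a : C) (n : ℕ) : C := cfcₙ (approxUnitFun (n + 1)) a

noncomputable def approxUnitSqrt (a : C) (n : ℕ) : C := cfcₙ (approxUnitSqrtFun (n + 1)) a

lemma isSelfAdjoint_approxUnit (a : C) (n : ℕ) : IsSelfAdjoint (approxUnit a n) :=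
  cfcₙ_predicate _ a

lemma isSelfAdjoint_approxUnitSqrt (a : C) (n : ℕ) : IsSelfAdjoint (approxUnitSqrt a n) :=
  cfcₙ_predicate _ a

lemma norm_approxUnit_le_one (a : C) (n : ℕ) : ‖approxUnit a n‖ ≤ 1 :=
  norm_cfcₙ_le fun t _ => abs_approxUnitFun_le_one (by positivity) t

lemma approxUnit_mul_approxUnit (a : C) (n m : ℕ) : approxUnit a n * approxUnit a m =
    cfcₙ (fun t => approxUnitFun (n + 1) t * approxUnitFun (m + 1) t) a :=
  (cfcₙ_mul _ _ a (continuous_approxUnitFun (by positivity)).continuousOn (approxUnitFun_zero _)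
    (continuous_approxUnitFun (by positivity)).continuousOn (approxUnitFun_zero _)).symm

variable [PartialOrder C] [StarOrderedRing C] {a : C} (ha : 0 ≤ a)
include ha

lemma norm_approxUnit_mul_sub_le (n : ℕ) : ‖approxUnit a n * a - a‖ ≤ 1 / (n + 1) := by
  have hf := (continuous_approxUnitFun (r := n + 1) (by positivity)).continuousOn
    (s := quasispectrum ℝ a)
  have h : a - approxUnit a n * a = cfcₙ (fun t => t - approxUnitFun (n + 1) t * t) a := by
    rw [cfcₙ_sub (fun t => t) (fun t => approxUnitFun (n + 1) t * t) a continuousOn_id rfl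
      (hf.mul continuousOn_id) (by simp),
      cfcₙ_mul _ (fun t => t) a hf (approxUnitFun_zero _) continuousOn_id rfl, cfcₙ_id' ℝ a,
      approxUnit]
  rw [norm_sub_rev, h]
  exact norm_cfcₙ_le fun t ht =>
    abs_sub_approxUnitFun_mul_self_le (by positivity) (quasispectrum_nonneg_of_nonneg a ha t ht)

lemma norm_approxUnit_mul_approxUnit_sub_le (n k : ℕ) :
    ‖approxUnit a n * approxUnit a k - approxUnit a k‖ ≤ (k + 1) / (n + 1) := by
  have hf (j : ℕ) := (continuous_approxUnitFun (r := j + 1) (by positivity)).continuousOn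
    (s := quasispectrum ℝ a)
  have h : approxUnit a k - approxUnit a n * approxUnit a k = cfcₙ
      (fun t => approxUnitFun (k + 1) t - approxUnitFun (n + 1) t * approxUnitFun (k + 1) t) a := by
    rw [approxUnit_mul_approxUnit, approxUnit,
      cfcₙ_sub _ (fun t => approxUnitFun (n + 1) t * approxUnitFun (k + 1) t) a (hf k)
        (approxUnitFun_zero _) ((hf n).mul (hf k)) (by simp)]
  rw [norm_sub_rev, h]
  exact norm_cfcₙ_le fun t ht => abs_sub_approxUnitFun_mul_le (by positivity) (by positivity)
    (quasispectrum_nonneg_of_nonneg a ha t ht)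

lemma approxUnitSqrt_mul_mul_approxUnitSqrt (n m : ℕ) :
    approxUnitSqrt a n * (a * approxUnitSqrt a m) = approxUnit a n * approxUnit a m := by
  have hg (j : ℕ) := (continuous_approxUnitSqrtFun (r := j + 1) (by positivity)).continuousOn
    (s := quasispectrum ℝ a)
  have h : approxUnitSqrt a n * (a * approxUnitSqrt a m) =
      cfcₙ (fun t => approxUnitSqrtFun (n + 1) t * (t * approxUnitSqrtFun (m + 1) t)) a := by
    rw [cfcₙ_mul _ (fun t => t * approxUnitSqrtFun (m + 1) t) a (hg n) (by simp)
      (continuousOn_id.mul (hg m)) (by simp),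
      cfcₙ_mul (fun t => t) _ a continuousOn_id rfl (hg m) (by simp), cfcₙ_id' ℝ a,
      approxUnitSqrt, approxUnitSqrt]
  rw [h, approxUnit_mul_approxUnit]
  exact cfcₙ_congr fun t ht => approxUnitSqrtFun_mul_mul (by positivity) (by positivity)
    (quasispectrum_nonneg_of_nonneg a ha t ht)

lemma approxUnitSqrt_mul_self_le (n : ℕ) :
    approxUnitSqrt a n * approxUnitSqrt a n ≤ ((n + 1) ^ 2 : ℝ) • a := by
  have hg := (continuous_approxUnitSqrtFun (r := n + 1) (by positivity)).continuousOn
    (s := quasispectrum ℝ a)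
  rw [approxUnitSqrt, ← cfcₙ_mul _ _ a hg (by simp) hg (by simp), ← cfcₙ_const_mul_id _ a]
  exact cfcₙ_mono fun t ht => approxUnitSqrtFun_mul_self_le (by positivity)
    (quasispectrum_nonneg_of_nonneg a ha t ht)

lemma tendsto_approxUnit_mul_self : Tendsto (fun n => approxUnit a n * a) atTop (𝓝 a) :=
  tendsto_sub_nhds_zero_iff.mp <| squeeze_zero_norm (norm_approxUnit_mul_sub_le ha)
    tendsto_one_div_add_atTop_nhds_zero_nat

lemma tendsto_approxUnit_mul_approxUnit (k : ℕ) :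
    Tendsto (fun n => approxUnit a n * approxUnit a k) atTop (𝓝 (approxUnit a k)) := by
  refine tendsto_sub_nhds_zero_iff.mp <| squeeze_zero_norm
    (norm_approxUnit_mul_approxUnit_sub_le ha · k) ?_
  simpa [mul_one_div, div_eq_mul_inv] using
    tendsto_one_div_add_atTop_nhds_zero_nat.const_mul ((k : ℝ) + 1)

end ApproxUnit

lemma lipschitzWith_one_mul_left {R : Type*} [NonUnitalSeminormedRing R] {c : R} (hc : ‖c‖ ≤ 1) :
    LipschitzWith 1 (c * ·) :=
  .mk_one fun x y => by
    simpa only [dist_eq_norm, ← mul_sub] using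
      (norm_mul_le c (x - y)).trans (mul_le_of_le_one_left (norm_nonneg _) hc)

lemma lipschitzWith_one_mul_right {R : Type*} [NonUnitalSeminormedRing R] {c : R} (hc : ‖c‖ ≤ 1) :
    LipschitzWith 1 (· * c) :=
  .mk_one fun x y => by
    simpa only [dist_eq_norm, ← sub_mul] using
      (norm_mul_le (x - y) c).trans (mul_le_of_le_one_right (norm_nonneg _) hc)

section Corner

variable {C : Type*} [NonUnitalCStarAlgebra C]

-- For `e = approxUnit a` this is the hereditary C⋆-subalgebra generated by `a`.
def seqCorner (e : ℕ → C) : Set C := {x | Tendsto (fun n => e n * x * e n) atTop (𝓝 x)}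

-- `(1 - e) * b * (1 - e)`, written without a unit.
def complConj (e b : C) : C := b - e * b - b * e + e * b * e

lemma complConj_sub (e x y : C) : complConj e (x - y) = complConj e x - complConj e y := by
  simp only [complConj]
  noncomm_ring

lemma complConj_star_mul_self {e : C} (he : IsSelfAdjoint e) (y : C) :
    complConj e (star y * y) = star (y - y * e) * (y - y * e) := by
  rw [complConj, star_sub, star_mul, he.star_eq]
  noncomm_ring

lemma norm_sub_mul_mul_self {e : C} (he : IsSelfAdjoint e) (y : C) :
    ‖y - y * e‖ * ‖y - y * e‖ = ‖complConj e (star y * y)‖ := by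
  rw [complConj_star_mul_self he, CStarRing.norm_star_mul_self]

lemma complConj_nonneg [PartialOrder C] [StarOrderedRing C] {e b : C} (he : IsSelfAdjoint e)
    (hb : 0 ≤ b) : 0 ≤ complConj e b := by
  obtain ⟨y, rfl⟩ := CStarAlgebra.nonneg_iff_eq_star_mul_self.mp hb
  rw [complConj_star_mul_self he]
  exact star_mul_self_nonneg _

lemma complConj_mono [PartialOrder C] [StarOrderedRing C] {e x y : C} (he : IsSelfAdjoint e)
    (h : x ≤ y) : complConj e x ≤ complConj e y :=
  sub_nonneg.mp <| complConj_sub e y x ▸ complConj_nonneg he (sub_nonneg.mpr h)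

variable {e : ℕ → C}

lemma zero_mem_seqCorner : (0 : C) ∈ seqCorner e := by
  simp [seqCorner]

lemma add_mem_seqCorner {x y : C} (hx : x ∈ seqCorner e) (hy : y ∈ seqCorner e) :
    x + y ∈ seqCorner e := by
  simpa only [seqCorner, Set.mem_ofPred_eq, mul_add, add_mul] using hx.add hy

lemma smul_mem_seqCorner (c : ℂ) {x : C} (hx : x ∈ seqCorner e) : c • x ∈ seqCorner e := by
  simpa only [seqCorner, Set.mem_ofPred_eq, mul_smul_comm, smul_mul_assoc] using hx.const_smul c

section SelfAdjoint

variable (he_sa : ∀ n, IsSelfAdjoint (e n))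
include he_sa

lemma tendsto_mul_left_iff_tendsto_star_mul_right {x : C} :
    Tendsto (fun n => e n * x) atTop (𝓝 x) ↔
      Tendsto (fun n => star x * e n) atTop (𝓝 (star x)) := by
  constructor <;> intro h <;> simpa [star_mul, (he_sa _).star_eq] using h.star

lemma star_mem_seqCorner {x : C} (hx : x ∈ seqCorner e) : star x ∈ seqCorner e := by
  simpa [seqCorner, star_mul, (he_sa _).star_eq, mul_assoc] using hx.star

lemma tendsto_mul_right_of_tendsto_complConj {y : C}
    (h : Tendsto (fun n => complConj (e n) (star y * y)) atTop (𝓝 0)) :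
    Tendsto (fun n => y * e n) atTop (𝓝 y) := by
  have h' := (Real.continuous_sqrt.tendsto 0).comp (tendsto_norm_zero.comp h)
  rw [tendsto_iff_norm_sub_tendsto_zero]
  simpa [Function.comp_def, ← norm_sub_mul_mul_self (he_sa _), norm_sub_rev (y * e _)] using h'

end SelfAdjoint

variable (he_norm : ∀ n, ‖e n‖ ≤ 1)
include he_norm

lemma isClosed_setOf_tendsto_mul_left :
    IsClosed {x | Tendsto (fun n => e n * x) atTop (𝓝 x)} :=
  (LipschitzWith.uniformEquicontinuous _ 1 fun n =>
    lipschitzWith_one_mul_left (he_norm n)).equicontinuous.isClosed_setOfPred_tendsto continuous_id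

lemma isClosed_seqCorner : IsClosed (seqCorner e) :=
  (LipschitzWith.uniformEquicontinuous (fun n x => e n * x * e n) 1 fun n => by
    simpa only [mul_one, Function.comp_def] using (lipschitzWith_one_mul_right (he_norm n)).comp
      (lipschitzWith_one_mul_left (he_norm n))).equicontinuous.isClosed_setOfPred_tendsto
    continuous_id

lemma mem_seqCorner_of_tendsto {x : C} (hl : Tendsto (fun n => e n * x) atTop (𝓝 x))
    (hr : Tendsto (fun n => x * e n) atTop (𝓝 x)) : x ∈ seqCorner e := by
  refine hl.congr_dist <| squeeze_zero (fun _ => dist_nonneg) (fun n => ?_)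
    (tendsto_iff_dist_tendsto_zero.mp hr)
  simpa only [dist_comm (e n * x), mul_assoc, NNReal.coe_one, one_mul] using
    (lipschitzWith_one_mul_left (he_norm n)).dist_le_mul (x * e n) x

variable (he_unit : ∀ k, Tendsto (fun n => e n * e k) atTop (𝓝 (e k)))
include he_unit

lemma tendsto_mul_left_of_mem_seqCorner {x : C} (hx : x ∈ seqCorner e) :
    Tendsto (fun n => e n * x) atTop (𝓝 x) :=
  (isClosed_setOf_tendsto_mul_left he_norm).mem_of_tendsto hx <| .of_forall fun k => by
    simpa only [Set.mem_ofPred_eq, mul_assoc] using (he_unit k).mul_const (x * e k)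

variable (he_sa : ∀ n, IsSelfAdjoint (e n))
include he_sa

lemma tendsto_mul_right_of_mem_seqCorner {x : C} (hx : x ∈ seqCorner e) :
    Tendsto (fun n => x * e n) atTop (𝓝 x) := by
  simpa using (tendsto_mul_left_iff_tendsto_star_mul_right he_sa).mp
    (tendsto_mul_left_of_mem_seqCorner he_norm he_unit (star_mem_seqCorner he_sa hx))

lemma mul_mem_seqCorner {x y : C} (hx : x ∈ seqCorner e) (hy : y ∈ seqCorner e) :
    x * y ∈ seqCorner e := by
  simpa only [seqCorner, Set.mem_ofPred_eq, mul_assoc] using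
    (tendsto_mul_left_of_mem_seqCorner he_norm he_unit hx).mul
      (tendsto_mul_right_of_mem_seqCorner he_norm he_unit he_sa hy)

lemma tendsto_complConj_of_mem_seqCorner {d : C} (hd : d ∈ seqCorner e) :
    Tendsto (fun n => complConj (e n) d) atTop (𝓝 0) := by
  simpa [complConj] using (((tendsto_const_nhds (x := d)).sub
    (tendsto_mul_left_of_mem_seqCorner he_norm he_unit hd)).sub
    (tendsto_mul_right_of_mem_seqCorner he_norm he_unit he_sa hd)).add hd

lemma mem_seqCorner_of_nonneg_of_le [PartialOrder C] [StarOrderedRing C] {x d : C} (hx : 0 ≤ x)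
    (hxd : x ≤ d) (hd : d ∈ seqCorner e) : x ∈ seqCorner e := by
  obtain ⟨s, rfl⟩ := CStarAlgebra.nonneg_iff_eq_star_mul_self.mp hx
  have hs : Tendsto (fun n => s * e n) atTop (𝓝 s) := by
    refine tendsto_mul_right_of_tendsto_complConj he_sa <| squeeze_zero_norm (fun n => ?_)
      (tendsto_zero_iff_norm_tendsto_zero.mp
        (tendsto_complConj_of_mem_seqCorner he_norm he_unit he_sa hd))
    exact CStarAlgebra.norm_le_norm_of_nonneg_of_le (complConj_nonneg (he_sa n) hx)
      (complConj_mono (he_sa n) hxd)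
  have hr : Tendsto (fun n => star s * s * e n) atTop (𝓝 (star s * s)) := by
    simpa only [mul_assoc] using hs.const_mul (star s)
  refine mem_seqCorner_of_tendsto he_norm ?_ hr
  simpa using (tendsto_mul_left_iff_tendsto_star_mul_right he_sa).mpr (by simpa using hr)

end Corner

section MulStar

variable {C : Type*} [NonUnitalCStarAlgebra C]

lemma norm_sub_eq_of_mul_star_eq {ι : Type*} {u v : ι → C}
    (h : ∀ i j, u i * star (u j) = v i * star (v j)) (i j : ι) : ‖u i - u j‖ = ‖v i - v j‖ := by
  have key : (u i - u j) * star (u i - u j) = (v i - v j) * star (v i - v j) := by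
    simp only [star_sub, mul_sub, sub_mul, h]
  have hnorm := congrArg norm key
  rw [CStarRing.norm_self_mul_star, CStarRing.norm_self_mul_star] at hnorm
  exact (mul_self_inj (norm_nonneg _) (norm_nonneg _)).mp hnorm

lemma cauchySeq_of_mul_star_eq {ι : Type*} [Nonempty ι] [SemilatticeSup ι] {u v : ι → C}
    (h : ∀ i j, u i * star (u j) = v i * star (v j)) (hv : CauchySeq v) : CauchySeq u := by
  rw [Metric.cauchySeq_iff] at hv ⊢
  simpa only [dist_eq_norm, norm_sub_eq_of_mul_star_eq h] using hv

variable [PartialOrder C] [StarOrderedRing C]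

lemma exists_tendsto_mul_approxUnitSqrt_mul {w z : C}
    (hw : Tendsto (fun n => w * approxUnit (z * star z) n) atTop (𝓝 w)) :
    ∃ z', Tendsto (fun n => w * approxUnitSqrt (z * star z) n * z) atTop (𝓝 z') ∧
      z' * star z' = w * star w := by
  set a := z * star z
  have hprod (n m : ℕ) : w * approxUnitSqrt a n * z * star (w * approxUnitSqrt a m * z) =
      w * approxUnit a n * star (w * approxUnit a m) := by
    simp only [star_mul, (isSelfAdjoint_approxUnitSqrt a m).star_eq,
      (isSelfAdjoint_approxUnit a m).star_eq]
    calc w * approxUnitSqrt a n * z * (star z * (approxUnitSqrt a m * star w))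
        = w * (approxUnitSqrt a n * (a * approxUnitSqrt a m)) * star w := by
          simp only [a]
          noncomm_ring
      _ = w * approxUnit a n * (approxUnit a m * star w) := by
          rw [approxUnitSqrt_mul_mul_approxUnitSqrt (mul_star_self_nonneg z)]
          noncomm_ring
  obtain ⟨z', hz'⟩ := cauchySeq_tendsto_of_complete (cauchySeq_of_mul_star_eq hprod hw.cauchySeq)
  refine ⟨z', hz', tendsto_nhds_unique (hz'.mul hz'.star) ?_⟩
  simpa only [hprod] using hw.mul hw.star

lemma star_mul_approxUnitSqrt_mul_le (w z : C) (n : ℕ) :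
    star (w * approxUnitSqrt (z * star z) n * z) * (w * approxUnitSqrt (z * star z) n * z) ≤
      (‖star w * w‖ * (n + 1) ^ 2 : ℝ) • (star z * z * (star z * z)) := by
  set c := approxUnitSqrt (z * star z) n
  have hc_sa : star c = c := (isSelfAdjoint_approxUnitSqrt _ n).star_eq
  have hc : c * (star w * w) * c ≤ (‖star w * w‖ * (n + 1) ^ 2 : ℝ) • (z * star z) := by
    calc c * (star w * w) * c ≤ ‖star w * w‖ • (c * c) := by
          simpa only [hc_sa] using
            CStarAlgebra.star_left_conjugate_le_norm_smul (a := c) (b := star w * w)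
      _ ≤ ‖star w * w‖ • (((n + 1) ^ 2 : ℝ) • (z * star z)) :=
          smul_le_smul_of_nonneg_left (approxUnitSqrt_mul_self_le (mul_star_self_nonneg z) n)
            (norm_nonneg _)
      _ = _ := smul_smul _ _ _
  calc star (w * c * z) * (w * c * z) = star z * (c * (star w * w) * c) * z := by
        simp only [star_mul, hc_sa]
        noncomm_ring
    _ ≤ star z * ((‖star w * w‖ * (n + 1) ^ 2 : ℝ) • (z * star z)) * z :=
        star_left_conjugate_le_conjugate hc z
    _ = _ := by
        rw [mul_smul_comm, smul_mul_assoc]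
        noncomm_ring

end MulStar

section Hereditary

variable {C : Type*} [NonUnitalCStarAlgebra C] (A : NonUnitalStarSubalgebra ℂ C)

structure IsClosedIdealIn (S I : Set C) : Prop where
  subset : I ⊆ S
  zero_mem : (0 : C) ∈ I
  add_mem : ∀ x ∈ I, ∀ y ∈ I, x + y ∈ I
  smul_mem : ∀ (c : ℂ), ∀ x ∈ I, c • x ∈ I
  mul_mem_left : ∀ a ∈ S, ∀ x ∈ I, a * x ∈ I
  mul_mem_right : ∀ a ∈ S, ∀ x ∈ I, x * a ∈ I
  isClosed : IsClosed I

lemma IsClosedIdealIn.inter_subalgebra {I : Set C} (hI : IsClosedIdealIn Set.univ I)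
    (hA : IsClosed (A : Set C)) : IsClosedIdealIn A (A ∩ I) where
  subset := Set.inter_subset_left
  zero_mem := ⟨ZeroMemClass.zero_mem A, hI.zero_mem⟩
  add_mem x hx y hy := ⟨AddMemClass.add_mem hx.1 hy.1, hI.add_mem x hx.2 y hy.2⟩
  smul_mem c x hx := ⟨SMulMemClass.smul_mem c hx.1, hI.smul_mem c x hx.2⟩
  mul_mem_left a ha x hx :=
    ⟨MulMemClass.mul_mem ha hx.1, hI.mul_mem_left a (Set.mem_univ a) x hx.2⟩
  mul_mem_right a ha x hx :=
    ⟨MulMemClass.mul_mem hx.1 ha, hI.mul_mem_right a (Set.mem_univ a) x hx.2⟩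
  isClosed := hA.inter hI.isClosed

variable [PartialOrder C]

structure IsHereditaryIn (S D : Set C) : Prop where
  subset : D ⊆ S
  zero_mem : (0 : C) ∈ D
  add_mem : ∀ x ∈ D, ∀ y ∈ D, x + y ∈ D
  smul_mem : ∀ (c : ℂ), ∀ x ∈ D, c • x ∈ D
  mul_mem : ∀ x ∈ D, ∀ y ∈ D, x * y ∈ D
  star_mem : ∀ x ∈ D, star x ∈ D
  isClosed : IsClosed D
  mem_of_nonneg_of_le : ∀ a ∈ S, ∀ d ∈ D, 0 ≤ a → a ≤ d → a ∈ D

lemma IsHereditaryIn.inter_subalgebra {D : Set C} (hD : IsHereditaryIn Set.univ D)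
    (hA : IsClosed (A : Set C)) : IsHereditaryIn A (A ∩ D) where
  subset := Set.inter_subset_left
  zero_mem := ⟨ZeroMemClass.zero_mem A, hD.zero_mem⟩
  add_mem x hx y hy := ⟨AddMemClass.add_mem hx.1 hy.1, hD.add_mem x hx.2 y hy.2⟩
  smul_mem c x hx := ⟨SMulMemClass.smul_mem c hx.1, hD.smul_mem c x hx.2⟩
  mul_mem x hx y hy := ⟨MulMemClass.mul_mem hx.1 hy.1, hD.mul_mem x hx.2 y hy.2⟩
  star_mem x hx := ⟨StarMemClass.star_mem hx.1, hD.star_mem x hx.2⟩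
  isClosed := hA.inter hD.isClosed
  mem_of_nonneg_of_le a ha d hd h0 had :=
    ⟨ha, hD.mem_of_nonneg_of_le a (Set.mem_univ a) d hd.2 h0 had⟩

lemma IsFillingIn.exists_of_not_subset {S F D I : Set C} (hF : IsFillingIn S F)
    (hD : IsHereditaryIn S D) (hI : IsClosedIdealIn S I) (hDI : ¬ D ⊆ I) :
    ∃ z ∈ S, star z * z ∈ D ∧ z * star z ∈ F ∧ z * star z ∉ I :=
  hF D hD.subset hD.zero_mem hD.add_mem hD.smul_mem hD.mul_mem hD.star_mem hD.isClosed
    hD.mem_of_nonneg_of_le I hI.subset hI.zero_mem hI.add_mem hI.smul_mem hI.mul_mem_left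
    hI.mul_mem_right hI.isClosed hDI

end Hereditary

section ApproxUnitCorner

variable {C : Type*} [NonUnitalCStarAlgebra C] [PartialOrder C] [StarOrderedRing C] {a : C}
  (ha : 0 ≤ a)
include ha

lemma isHereditaryIn_univ_seqCorner_approxUnit :
    IsHereditaryIn Set.univ (seqCorner (approxUnit a)) where
  subset := Set.subset_univ _
  zero_mem := zero_mem_seqCorner
  add_mem _ hx _ hy := add_mem_seqCorner hx hy
  smul_mem c _ hx := smul_mem_seqCorner c hx
  mul_mem _ hx _ hy := mul_mem_seqCorner (norm_approxUnit_le_one a)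
    (tendsto_approxUnit_mul_approxUnit ha) (isSelfAdjoint_approxUnit a) hx hy
  star_mem _ hx := star_mem_seqCorner (isSelfAdjoint_approxUnit a) hx
  isClosed := isClosed_seqCorner (norm_approxUnit_le_one a)
  mem_of_nonneg_of_le _ _ _ hd hx hxd := mem_seqCorner_of_nonneg_of_le (norm_approxUnit_le_one a)
    (tendsto_approxUnit_mul_approxUnit ha) (isSelfAdjoint_approxUnit a) hx hxd hd

lemma self_mem_seqCorner_approxUnit : a ∈ seqCorner (approxUnit a) := by
  have hl := tendsto_approxUnit_mul_self ha
  refine mem_seqCorner_of_tendsto (norm_approxUnit_le_one a) hl ?_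
  simpa [ha.isSelfAdjoint.star_eq] using
    (tendsto_mul_left_iff_tendsto_star_mul_right (isSelfAdjoint_approxUnit a)).mp hl

lemma tendsto_mul_approxUnit_of_star_mul_self_mem {w : C}
    (hw : star w * w ∈ seqCorner (approxUnit a)) :
    Tendsto (fun n => w * approxUnit a n) atTop (𝓝 w) :=
  tendsto_mul_right_of_tendsto_complConj (isSelfAdjoint_approxUnit a) <|
    tendsto_complConj_of_mem_seqCorner (norm_approxUnit_le_one a)
      (tendsto_approxUnit_mul_approxUnit ha) (isSelfAdjoint_approxUnit a) hw

end ApproxUnitCorner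

theorem isFillingIn_trans_general (A : NonUnitalStarSubalgebra ℂ B) (hA : IsClosed (A : Set B))
    (F : Set B)
    (hF : IsFillingIn (A : Set B) F)
    (hApos : IsFillingIn (Set.univ : Set B) {a : B | a ∈ A ∧ 0 ≤ a}) :
    IsFillingIn (Set.univ : Set B) F := by
  intro D hDS hD0 hDadd hDsmul hDmul hDstar hDclosed hDher
    I hIS hI0 hIadd hIsmul hIl hIr hIclosed hDI
  have hI : IsClosedIdealIn Set.univ I := ⟨hIS, hI0, hIadd, hIsmul, hIl, hIr, hIclosed⟩
  obtain ⟨z, -, hzD, ⟨haA, -⟩, haI⟩ := hApos.exists_of_not_subset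
    ⟨hDS, hD0, hDadd, hDsmul, hDmul, hDstar, hDclosed, hDher⟩ hI hDI
  have ha : 0 ≤ z * star z := mul_star_self_nonneg z
  obtain ⟨w, hwA, ⟨-, hwH⟩, hwF, hwI⟩ := hF.exists_of_not_subset
    ((isHereditaryIn_univ_seqCorner_approxUnit ha).inter_subalgebra A hA)
    (hI.inter_subalgebra A hA)
    fun h => haI (h ⟨haA, self_mem_seqCorner_approxUnit ha⟩).2
  obtain ⟨z', hz', hz'w⟩ :=
    exists_tendsto_mul_approxUnitSqrt_mul (tendsto_mul_approxUnit_of_star_mul_self_mem ha hwH)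
  refine ⟨z', Set.mem_univ z', ?_, hz'w ▸ hwF, fun h => hwI ⟨?_, hz'w ▸ h⟩⟩
  · refine hDclosed.mem_of_tendsto (hz'.star.mul hz') (.of_forall fun n => ?_)
    have hsq : (‖star w * w‖ * (n + 1) ^ 2 : ℝ) • (star z * z * (star z * z)) ∈ D := by
      simpa only [Complex.coe_smul] using
        hDsmul (‖star w * w‖ * (n + 1) ^ 2 : ℝ) _ (hDmul _ hzD _ hzD)
    exact hDher _ (Set.mem_univ _) _ hsq (star_mul_self_nonneg _)
      (star_mul_approxUnitSqrt_mul_le w z n)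
  · exact mul_mem hwA (star_mem hwA)

/-- If `A` is a (closed) C*-subalgebra of `B`, `F ⊆ A₊` is a filling family for `A`,
and `A₊` is a filling family for `B`, then `F` is a filling family for `B`. -/
theorem isFillingIn_trans (A : NonUnitalStarSubalgebra ℂ B) (hA : IsClosed (A : Set B))
    (F : Set B) (hFA : F ⊆ (A : Set B)) (hFpos : ∀ f ∈ F, (0 : B) ≤ f)
    (hF : IsFillingIn (A : Set B) F)
    (hApos : IsFillingIn (Set.univ : Set B) {a : B | a ∈ A ∧ 0 ≤ a}) :
    IsFillingIn (Set.univ : Set B) F :=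
  isFillingIn_trans_general A hA F hF hApos
end

section
/- Let A = C₀(X) for a locally compact Hausdorff space X, and F ⊆ A₊. Then F is a filling family for A if and only if the open supports {x ∈ X : f(x) > 0} of the functions f ∈ F form a base of the topology of X. -/
open scoped ZeroAtInfty ComplexOrder

variable {X : Type*} [TopologicalSpace X] [LocallyCompactSpace X] [T2Space X]

/-- `F` is a filling family for `C₀(X, ℂ)`: for every hereditary C*-subalgebra `D`
and every closed two-sided ideal `I` of `C₀(X, ℂ)` with `D ⊄ I`, there is `z` with
`star z * z ∈ D`, `z * star z ∈ F` and `z * star z ∉ I`.  (The order on `ℂ`-valued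
functions is the pointwise one coming from the partial order of `ℂ`.) -/
def IsFillingFamilyC0 (F : Set C₀(X, ℂ)) : Prop :=
  ∀ D : Set C₀(X, ℂ), (0 : C₀(X, ℂ)) ∈ D →
    (∀ x ∈ D, ∀ y ∈ D, x + y ∈ D) →
    (∀ (c : ℂ), ∀ x ∈ D, c • x ∈ D) →
    (∀ x ∈ D, ∀ y ∈ D, x * y ∈ D) →
    (∀ x ∈ D, star x ∈ D) →
    IsClosed D →
    (∀ a : C₀(X, ℂ), ∀ d ∈ D, (∀ t : X, 0 ≤ a t) → (∀ t : X, a t ≤ d t) → a ∈ D) →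
  ∀ I : Set C₀(X, ℂ), (0 : C₀(X, ℂ)) ∈ I →
    (∀ x ∈ I, ∀ y ∈ I, x + y ∈ I) →
    (∀ (c : ℂ), ∀ x ∈ I, c • x ∈ I) →
    (∀ a : C₀(X, ℂ), ∀ x ∈ I, a * x ∈ I) →
    (∀ a : C₀(X, ℂ), ∀ x ∈ I, x * a ∈ I) →
    IsClosed I →
  ¬ D ⊆ I →
  ∃ z : C₀(X, ℂ), star z * z ∈ D ∧ z * star z ∈ F ∧ z * star z ∉ I

/-!
If the supports of `F` form a base, take `d ∈ D \ I`. A closed ideal contains every function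
vanishing on its hull, so `d` is nonzero at some point `x` of the hull of `I`. A function `f ∈ F`
that is nonzero at `x` and supported where `|d|²` exceeds `|d x|² / 2` is dominated by a multiple
of `d* d ∈ D`, so `f ∈ D`, and `z = √f` is the required witness. Conversely, applying the filling
property to the functions vanishing off an open `U` and those vanishing at `x ∈ U` yields
`z z* ∈ F`, nonzero at `x` and supported in `U`.
-/

open Filter Topology Set

theorem Complex.le_ofReal_div_mul {a b : ℂ} (ha : 0 ≤ a) (hb : 0 ≤ b) {M r : ℝ} (hr : 0 < r)
    (haM : ‖a‖ ≤ M) (hab : a ≠ 0 → r < ‖b‖) : a ≤ ((M / r : ℝ) : ℂ) * b := by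
  rw [Complex.eq_coe_norm_of_nonneg ha, Complex.eq_coe_norm_of_nonneg hb, ← Complex.ofReal_mul,
    Complex.real_le_real]
  have hM : 0 ≤ M := (norm_nonneg a).trans haM
  rcases eq_or_ne a 0 with rfl | ha0
  · simp only [norm_zero]
    positivity
  · calc ‖a‖ ≤ M / r * r := by rwa [div_mul_cancel₀ _ hr.ne']
      _ ≤ M / r * ‖b‖ := by gcongr; exact (hab ha0).le

namespace ZeroAtInftyContinuousMap

instance {Y β : Type*} [TopologicalSpace Y] [PseudoMetricSpace β] [Zero β] :
    ContinuousEvalConst C₀(Y, β) Y β where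
  continuous_eval_const t :=
    (continuous_eval_const (F := BoundedContinuousFunction Y β) t).comp
      (isometry_toBCF (α := Y) (β := β)).continuous

section Normed

variable {Y β : Type*} [TopologicalSpace Y] [SeminormedAddCommGroup β]

theorem norm_apply_le (f : C₀(Y, β)) (t : Y) : ‖f t‖ ≤ ‖f‖ :=
  BoundedContinuousFunction.norm_coe_le_norm f.toBCF t

theorem norm_le_of_forall_norm_apply_le {f : C₀(Y, β)} {C : ℝ} (hC : 0 ≤ C)
    (h : ∀ t, ‖f t‖ ≤ C) : ‖f‖ ≤ C :=
  (BoundedContinuousFunction.norm_le hC).mpr h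

theorem isCompact_setOf_le_norm (f : C₀(Y, β)) {r : ℝ} (hr : 0 < r) :
    IsCompact {t | r ≤ ‖f t‖} := by
  obtain ⟨K, hK, hKc⟩ := mem_cocompact.mp (zero_at_infty f (Metric.ball_mem_nhds 0 hr))
  refine hK.of_isClosed_subset (isClosed_le continuous_const (map_continuous f).norm)
    fun t ht => ?_
  by_contra htK
  have : ‖f t‖ < r := by simpa using hKc htK
  exact this.not_ge ht

end Normed

def compLeft {Y β γ : Type*} [TopologicalSpace Y] [TopologicalSpace β] [Zero β]
    [TopologicalSpace γ] [Zero γ] (g : C(β, γ)) (hg : g 0 = 0) (f : C₀(Y, β)) : C₀(Y, γ) where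
  toContinuousMap := g.comp f
  zero_at_infty' := by simpa [hg] using (g.continuous.tendsto 0).comp (zero_at_infty f)

theorem compLeft_apply {Y β γ : Type*} [TopologicalSpace Y] [TopologicalSpace β] [Zero β]
    [TopologicalSpace γ] [Zero γ] (g : C(β, γ)) (hg : g 0 = 0) (f : C₀(Y, β)) (t : Y) :
    compLeft g hg f t = g (f t) :=
  rfl

variable {Y : Type*} [TopologicalSpace Y]

theorem exists_apply_eq_mul_of_norm_le {R : Type*} [NonUnitalSeminormedRing R] (f : C₀(Y, R))
    {u : Y → R} (hu : Continuous u) {C : ℝ} (huC : ∀ t, ‖u t‖ ≤ C) :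
    ∃ a : C₀(Y, R), ∀ t, a t = f t * u t :=
  ⟨⟨⟨fun t => f t * u t, (map_continuous f).mul hu⟩,
    (zero_at_infty f).zero_mul_isBoundedUnder_le ⟨C, eventually_map.mpr (.of_forall huC)⟩⟩,
    fun _ => rfl⟩

theorem exists_star_mul_self_eq {f : C₀(Y, ℂ)} (hf : ∀ t, 0 ≤ f t) :
    ∃ z : C₀(Y, ℂ), star z * z = f := by
  refine ⟨compLeft ⟨fun w => (√w.re : ℂ), by fun_prop⟩ (by simp) f, ext fun t => ?_⟩
  have hft := Complex.eq_coe_norm_of_nonneg (hf t)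
  simp only [coe_mul, coe_star, Pi.mul_apply, Pi.star_apply, compLeft_apply, ContinuousMap.coe_mk]
  rw [hft, Complex.ofReal_re, Complex.star_def, Complex.conj_ofReal, ← Complex.ofReal_mul,
    Real.mul_self_sqrt (norm_nonneg _)]

def vanishingOn (s : Set Y) : Set C₀(Y, ℂ) := {f | ∀ t ∈ s, f t = 0}

variable {s : Set Y} {f g : C₀(Y, ℂ)}

theorem zero_mem_vanishingOn : 0 ∈ vanishingOn s :=
  fun _ _ => rfl

theorem add_mem_vanishingOn (hf : f ∈ vanishingOn s) (hg : g ∈ vanishingOn s) :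
    f + g ∈ vanishingOn s :=
  fun t ht => by simp [hf t ht, hg t ht]

theorem smul_mem_vanishingOn (c : ℂ) (hf : f ∈ vanishingOn s) : c • f ∈ vanishingOn s :=
  fun t ht => by simp [hf t ht]

theorem mul_mem_vanishingOn_left (g : C₀(Y, ℂ)) (hf : f ∈ vanishingOn s) :
    g * f ∈ vanishingOn s :=
  fun t ht => by simp [hf t ht]

theorem mul_mem_vanishingOn_right (g : C₀(Y, ℂ)) (hf : f ∈ vanishingOn s) :
    f * g ∈ vanishingOn s :=
  fun t ht => by simp [hf t ht]

theorem star_mem_vanishingOn (hf : f ∈ vanishingOn s) : star f ∈ vanishingOn s :=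
  fun t ht => by simp [hf t ht]

theorem isClosed_vanishingOn (s : Set Y) : IsClosed (vanishingOn s) := by
  simp only [vanishingOn, ofPred_forall]
  exact isClosed_biInter fun t _ => isClosed_eq (continuous_eval_const t) continuous_const

theorem mem_vanishingOn_of_le (hg : g ∈ vanishingOn s) (hf0 : ∀ t, 0 ≤ f t)
    (hfg : ∀ t, f t ≤ g t) : f ∈ vanishingOn s :=
  fun t ht => le_antisymm (hg t ht ▸ hfg t) (hf0 t)

theorem exists_norm_sub_mul_le {d h : C₀(Y, ℂ)} (hh : ∀ t, 0 ≤ h t) {ε c : ℝ} (hε : 0 < ε)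
    (hc : 0 < c) (hdh : ∀ t, ε ≤ ‖d t‖ → c ≤ ‖h t‖) : ∃ a : C₀(Y, ℂ), ‖d - a * h‖ ≤ ε := by
  set δ : ℝ := c * ε / (‖d‖ + 1)
  have hδ : 0 < δ := by positivity
  have hden : ∀ t, h t + δ = ((‖h t‖ + δ : ℝ) : ℂ) := fun t => by
    rw [Complex.ofReal_add, ← Complex.eq_coe_norm_of_nonneg (hh t)]
  have hne : ∀ t, h t + δ ≠ 0 := fun t => by
    rw [hden]; exact_mod_cast (by positivity : ‖h t‖ + δ ≠ 0)
  obtain ⟨a, ha⟩ := exists_apply_eq_mul_of_norm_le d (u := fun t => (h t + δ)⁻¹)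
    (((map_continuous h).add continuous_const).inv₀ hne)
    (C := δ⁻¹) fun t => by
      rw [hden, norm_inv, Complex.norm_real, Real.norm_of_nonneg (by positivity)]
      exact inv_anti₀ hδ (le_add_of_nonneg_left (norm_nonneg _))
  refine ⟨a, norm_le_of_forall_norm_apply_le hε.le fun t => ?_⟩
  -- `d - a * h = d δ / (h + δ)` is small where `d` is, and is `≤ ‖d‖ δ / c` where `d` is not
  have hpos : 0 < ‖h t‖ + δ := by positivity
  have hsub : (d - a * h) t = d t * δ / (h t + δ) := by
    rw [sub_apply, mul_apply, ha]
    field_simp [hne t]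
    ring
  rw [hsub, norm_div, norm_mul, hden, Complex.norm_real, Complex.norm_real,
    Real.norm_of_nonneg hδ.le, Real.norm_of_nonneg hpos.le, div_le_iff₀ hpos]
  rcases lt_or_ge ‖d t‖ ε with hlt | hle
  · nlinarith [norm_nonneg (h t)]
  · have hdd : ‖d‖ / (‖d‖ + 1) ≤ 1 := by
      rw [div_le_one (by positivity)]; linarith
    calc ‖d t‖ * δ ≤ ‖d‖ * δ := by gcongr; exact norm_apply_le d t
      _ = c * ε * (‖d‖ / (‖d‖ + 1)) := by ring
      _ ≤ c * ε := mul_le_of_le_one_right (by positivity) hdd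
      _ ≤ ε * (‖h t‖ + δ) := by nlinarith [hdh t hle]

section Ideal

def hull (I : Set C₀(Y, ℂ)) : Set Y := {t | ∀ g ∈ I, g t = 0}

variable {I : Set C₀(Y, ℂ)}

theorem exists_mem_nonneg_pos_on_of_isCompact (h0 : (0 : C₀(Y, ℂ)) ∈ I)
    (hadd : ∀ x ∈ I, ∀ y ∈ I, x + y ∈ I) (hmul : ∀ a : C₀(Y, ℂ), ∀ x ∈ I, a * x ∈ I)
    {K : Set Y} (hK : IsCompact K)
    (hKI : Disjoint K (hull I)) : ∃ h ∈ I, (∀ t, 0 ≤ h t) ∧ ∀ t ∈ K, 0 < h t := by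
  refine hK.induction_on ⟨0, h0, fun _ => le_rfl, by simp⟩ ?_ ?_ ?_
  · rintro S T hST ⟨h, hI, hnn, hpos⟩
    exact ⟨h, hI, hnn, fun t ht => hpos t (hST ht)⟩
  · rintro S T ⟨h, hI, hnn, hpos⟩ ⟨h', hI', hnn', hpos'⟩
    refine ⟨h + h', hadd _ hI _ hI', fun t => add_nonneg (hnn t) (hnn' t), ?_⟩
    rintro t (ht | ht)
    · exact add_pos_of_pos_of_nonneg (hpos t ht) (hnn' t)
    · exact add_pos_of_nonneg_of_pos (hnn t) (hpos' t ht)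
  · intro t ht
    obtain ⟨g, hgI, hgt⟩ : ∃ g ∈ I, g t ≠ 0 := by
      simpa [hull] using disjoint_left.mp hKI ht
    refine ⟨{y | g y ≠ 0}, mem_nhdsWithin_of_mem_nhds <|
      (isOpen_ne_fun (map_continuous g) continuous_const).mem_nhds hgt,
      star g * g, hmul _ _ hgI, fun y => star_mul_self_nonneg (g y),
      fun y hy => star_mul_self_pos (.of_ne_zero hy)⟩

theorem vanishingOn_hull_subset_closure (h0 : (0 : C₀(Y, ℂ)) ∈ I)
    (hadd : ∀ x ∈ I, ∀ y ∈ I, x + y ∈ I) (hmul : ∀ a : C₀(Y, ℂ), ∀ x ∈ I, a * x ∈ I) :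
    vanishingOn (hull I) ⊆ closure I := by
  intro d hd
  refine Metric.mem_closure_iff.mpr fun ε hε => ?_
  have hK := isCompact_setOf_le_norm d (half_pos hε)
  have hKI : Disjoint {t | ε / 2 ≤ ‖d t‖} (hull I) := disjoint_left.mpr fun t ht htI => by
    have : ε / 2 ≤ ‖d t‖ := ht
    simp [hd t htI] at this
    linarith
  obtain ⟨h, hI, hnn, hpos⟩ := exists_mem_nonneg_pos_on_of_isCompact h0 hadd hmul hK hKI
  obtain ⟨c, hc, hcK⟩ := hK.exists_forall_le' (map_continuous h).norm.continuousOn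
    fun t ht => norm_pos_iff.mpr (hpos t ht).ne'
  obtain ⟨a, ha⟩ := exists_norm_sub_mul_le hnn (half_pos hε) hc hcK
  exact ⟨a * h, hmul a h hI, by rw [dist_eq_norm]; linarith⟩

end Ideal

theorem exists_apply_ne_zero_mem_vanishingOn_compl [LocallyCompactSpace Y] [T2Space Y]
    {U : Set Y} (hU : IsOpen U) {x : Y} (hx : x ∈ U) :
    ∃ f ∈ vanishingOn Uᶜ, f x ≠ 0 := by
  obtain ⟨b, hb1, hb0, hbc, -⟩ := exists_continuous_one_zero_of_isCompact isCompact_singleton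
    hU.isClosed_compl (disjoint_singleton_left.mpr fun h => h hx)
  refine ⟨compLeft ⟨((↑) : ℝ → ℂ), Complex.continuous_ofReal⟩ Complex.ofReal_zero
    ⟨b, hbc.is_zero_at_infty⟩, fun t ht => ?_, ?_⟩
  · show ((b t : ℝ) : ℂ) = 0
    simp [hb0 ht]
  · show ((b x : ℝ) : ℂ) ≠ 0
    simp [hb1 rfl]

theorem mem_of_support_subset_setOf_lt_norm {D : Set C₀(Y, ℂ)}
    (hsmul : ∀ (c : ℂ), ∀ x ∈ D, c • x ∈ D)
    (hher : ∀ a : C₀(Y, ℂ), ∀ d ∈ D, (∀ t, 0 ≤ a t) → (∀ t, a t ≤ d t) → a ∈ D)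
    {e : C₀(Y, ℂ)} (he : e ∈ D) (he0 : ∀ t, 0 ≤ e t) {r : ℝ} (hr : 0 < r)
    {f : C₀(Y, ℂ)} (hf0 : ∀ t, 0 ≤ f t) (hfe : Function.support f ⊆ {t | r < ‖e t‖}) :
    f ∈ D :=
  hher f _ (hsmul ((‖f‖ / r : ℝ) : ℂ) e he) hf0 fun t =>
    Complex.le_ofReal_div_mul (hf0 t) (he0 t) hr (norm_apply_le f t) fun h => hfe h

end ZeroAtInftyContinuousMap

open ZeroAtInftyContinuousMap

section Filling

variable {Y : Type*} [TopologicalSpace Y]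

theorem IsFillingFamilyC0.exists_apply_ne_zero_support_subset [LocallyCompactSpace Y]
    [T2Space Y] {F : Set C₀(Y, ℂ)} (hF : IsFillingFamilyC0 F) {U : Set Y} (hU : IsOpen U)
    {x : Y} (hx : x ∈ U) :
    ∃ f ∈ F, f x ≠ 0 ∧ ∀ y, f y ≠ 0 → y ∈ U := by
  obtain ⟨b, hbU, hbx⟩ := exists_apply_ne_zero_mem_vanishingOn_compl hU hx
  obtain ⟨z, hzD, hzF, hzI⟩ := hF (vanishingOn Uᶜ) zero_mem_vanishingOn
    (fun _ hf _ hg => add_mem_vanishingOn hf hg) (fun c _ => smul_mem_vanishingOn c)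
    (fun _ hf g _ => mul_mem_vanishingOn_right g hf) (fun _ => star_mem_vanishingOn)
    (isClosed_vanishingOn _) (fun _ _ => mem_vanishingOn_of_le)
    (vanishingOn {x}) zero_mem_vanishingOn (fun _ hf _ hg => add_mem_vanishingOn hf hg)
    (fun c _ => smul_mem_vanishingOn c) (fun a _ => mul_mem_vanishingOn_left a)
    (fun a _ => mul_mem_vanishingOn_right a) (isClosed_vanishingOn _)
    fun hDI => hbx (hDI hbU x rfl)
  refine ⟨z * star z, hzF, fun hzx => hzI fun t ht => ht ▸ hzx, fun y hy => ?_⟩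
  by_contra hyU
  exact hy (mul_comm z (star z) ▸ hzD y hyU)

theorem IsFillingFamilyC0.of_forall_isOpen {F : Set C₀(Y, ℂ)} (hF : ∀ f ∈ F, ∀ x, 0 ≤ f x)
    (hB : ∀ U : Set Y, IsOpen U → ∀ x ∈ U, ∃ f ∈ F, f x ≠ 0 ∧ ∀ y, f y ≠ 0 → y ∈ U) :
    IsFillingFamilyC0 F := by
  intro D _ _ hDsmul hDmul hDstar _ hDher I hI0 hIadd _ hImul _ hIcl hDI
  obtain ⟨d, hdD, hdI⟩ := not_subset.mp hDI
  obtain ⟨x, hxI, hdx⟩ : ∃ x ∈ hull I, d x ≠ 0 := by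
    by_contra! h
    exact hdI (hIcl.closure_subset (vanishingOn_hull_subset_closure hI0 hIadd hImul h))
  set e := star d * d
  have he0 : ∀ t, 0 ≤ e t := fun t => star_mul_self_nonneg (d t)
  have hex : 0 < ‖e x‖ := norm_pos_iff.mpr (star_mul_self_pos (.of_ne_zero hdx)).ne'
  obtain ⟨f, hfF, hfx, hfU⟩ := hB {t | ‖e x‖ / 2 < ‖e t‖}
    (isOpen_lt continuous_const (map_continuous e).norm) x (half_lt_self hex)
  have hfD : f ∈ D := mem_of_support_subset_setOf_lt_norm hDsmul hDher
    (hDmul _ (hDstar d hdD) d hdD) he0 (half_pos hex) (hF f hfF) hfU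
  obtain ⟨z, hz⟩ := exists_star_mul_self_eq (hF f hfF)
  have hz' : z * star z = f := by rw [mul_comm, hz]
  exact ⟨z, hz ▸ hfD, hz' ▸ hfF, hz' ▸ fun hfI => hfx (hxI f hfI)⟩

end Filling

/-- A family `F` of positive functions in `C₀(X, ℂ)` is filling if and only if the
open supports `{x | f x ≠ 0}` of the functions `f ∈ F` form a base of the topology
of `X`. -/
theorem isFillingFamilyC0_iff_supports_basis (F : Set C₀(X, ℂ))
    (hF : ∀ f ∈ F, ∀ x : X, 0 ≤ f x) :
    IsFillingFamilyC0 F ↔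
      ∀ U : Set X, IsOpen U → ∀ x ∈ U, ∃ f ∈ F, f x ≠ 0 ∧ ∀ y : X, f y ≠ 0 → y ∈ U :=
  ⟨fun hfill _ hU _ hx => IsFillingFamilyC0.exists_apply_ne_zero_support_subset hfill hU hx,
    IsFillingFamilyC0.of_forall_isOpen hF⟩
end

section
/- Define g : (0,1] → (0,1] by g(t) := min(4·max(t - 1/2, 0), t), and let φ : C₀(0,1] → C₀(0,1] be the *-homomorphism φ(f) := f ∘ g. Then there is no *-homomorphism ψ : C_b(0,1] → C_b(0,1] from the bounded continuous functions to themselves with ψ(f) = f ∘ g for all f ∈ C₀(0,1]. -/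
open scoped ZeroAtInfty BoundedContinuousFunction

/-!
Since `C₀(0,1]` is an ideal in `C_b(0,1]` and every point carries a `C₀` function equal to `1`
there, multiplicativity forces `ψ b s = b (g s)` for every bounded `b` and every `s` with
`g s ∈ (0,1]`. As `g (1/2 + c/4) = c` for small `c > 0`, continuity of `ψ b` at `1/2` would give
every bounded continuous `b` a limit at `0`, which fails for `b t = exp (i/t)`.
-/

open Filter Topology Complex

theorem Function.Periodic.eq_of_tendsto_atTop {α β : Type*} [Field α] [LinearOrder α]
    [IsStrictOrderedRing α] [Archimedean α] [TopologicalSpace β] [T2Space β]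
    {f : α → β} {p : α} {L : β} (hf : Function.Periodic f p) (hp : 0 < p)
    (h : Tendsto f atTop (𝓝 L)) (x : α) : f x = L := by
  have hshift : Tendsto (fun n : ℕ => x + n * p) atTop atTop :=
    tendsto_atTop_add_const_left atTop x
      ((tendsto_natCast_atTop_atTop (R := α)).atTop_mul_const hp)
  have hconst : Tendsto (fun n : ℕ => f (x + n * p)) atTop (𝓝 (f x)) :=
    tendsto_const_nhds.congr fun n => (hf.nat_mul n x).symm
  exact tendsto_nhds_unique hconst (h.comp hshift)

section ZeroAtInfty

variable {X : Type*} [TopologicalSpace X]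

theorem ZeroAtInftyContinuousMap.exists_toBCF_eq_mul {R : Type*} [NonUnitalNormedRing R]
    (b : X →ᵇ R) (f : C₀(X, R)) : ∃ F : C₀(X, R), F.toBCF = b * f.toBCF :=
  ⟨⟨⟨b * f, b.continuous.mul f.continuous⟩,
    isBoundedUnder_le_mul_tendsto_zero (isBoundedUnder_of ⟨‖b‖, b.norm_coe_le_norm⟩)
      (ZeroAtInftyContinuousMapClass.zero_at_infty f)⟩, rfl⟩

theorem ZeroAtInftyContinuousMap.exists_apply_eq_one {𝕜 : Type*} [RCLike 𝕜] [RegularSpace X]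
    [LocallyCompactSpace X] (x : X) : ∃ h : C₀(X, 𝕜), h x = 1 := by
  obtain ⟨h, hx, -, hsupp, -⟩ := exists_continuous_one_zero_of_isCompact isCompact_singleton
    isClosed_empty (Set.disjoint_empty {x})
  refine ⟨⟨⟨fun t => (h t : 𝕜), by fun_prop⟩, ?_⟩, ?_⟩
  · exact (hsupp.comp_left RCLike.ofReal_zero).is_zero_at_infty
  · simp [hx rfl]

theorem apply_eq_of_forall_zeroAtInfty {Y 𝕜 F : Type*} [TopologicalSpace Y] [RCLike 𝕜]
    [RegularSpace X] [LocallyCompactSpace X] [FunLike F (X →ᵇ 𝕜) (Y →ᵇ 𝕜)]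
    [MulHomClass F (X →ᵇ 𝕜) (Y →ᵇ 𝕜)] (ψ : F) {x : X} {y : Y}
    (hψ : ∀ f : C₀(X, 𝕜), ψ f.toBCF y = f x) (b : X →ᵇ 𝕜) : ψ b y = b x := by
  obtain ⟨h, hx⟩ := ZeroAtInftyContinuousMap.exists_apply_eq_one (𝕜 := 𝕜) x
  obtain ⟨F, hF⟩ := h.exists_toBCF_eq_mul b
  calc ψ b y = ψ (b * h.toBCF) y := by
        rw [map_mul, BoundedContinuousFunction.mul_apply, hψ h, hx, mul_one]
    _ = b x := by
        rw [← hF, hψ F]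
        simpa [hx] using DFunLike.congr_fun hF x

end ZeroAtInfty

instance Set.Ioc.locallyCompactSpace {α : Type*} [TopologicalSpace α] [LinearOrder α]
    [ClosedIicTopology α] [LocallyCompactSpace α] {a b : α} :
    LocallyCompactSpace (Set.Ioc a b) :=
  Topology.IsInducing.subtypeVal.locallyCompactSpace (Subtype.range_coe ▸ isLocallyClosed_Ioc)

theorem Complex.not_tendsto_exp_inv_mul_I_nhdsGT_zero (L : ℂ) :
    ¬ Tendsto (fun t : ℝ => exp (t⁻¹ * I)) (𝓝[>] 0) (𝓝 L) := by
  intro h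
  have hper : Function.Periodic (fun s : ℝ => exp (s * I)) (2 * Real.pi) := fun s => by
    simpa [add_mul] using exp_periodic (s * I)
  have hlim : Tendsto (fun s : ℝ => exp (s * I)) atTop (𝓝 L) := by
    simpa [Function.comp_def] using h.comp tendsto_inv_atTop_nhdsGT_zero
  have h0 := hper.eq_of_tendsto_atTop Real.two_pi_pos hlim 0
  have hπ := hper.eq_of_tendsto_atTop Real.two_pi_pos hlim Real.pi
  rw [exp_pi_mul_I, ← h0, ofReal_zero, zero_mul, exp_zero] at hπ
  norm_num at hπ

namespace NoMultiplierExtension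

noncomputable def oscillation : Set.Ioc (0:ℝ) 1 →ᵇ ℂ :=
  .ofNormedAddCommGroup (fun t => exp ((t : ℝ)⁻¹ * I))
    (by
      refine continuous_exp.comp (Continuous.mul ?_ continuous_const)
      exact continuous_ofReal.comp (continuous_subtype_val.inv₀ fun t => t.2.1.ne'))
    1 fun t => by simpa using (norm_exp_ofReal_mul_I (t : ℝ)⁻¹).le

noncomputable def halfShift (c : ℝ) : Set.Ioc (0:ℝ) 1 :=
  Set.inclusion (Set.Icc_subset_Ioc (by norm_num) le_rfl)
    (Set.projIcc (1/2) 1 (by norm_num) (1/2 + c/4))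

theorem continuous_halfShift : Continuous halfShift :=
  (continuous_inclusion _).comp (continuous_projIcc.comp (by fun_prop))

theorem g_halfShift {c : ℝ} (hc₀ : 0 ≤ c) (hc : c ≤ 2/3) :
    min (4 * max ((halfShift c : ℝ) - 1/2) 0) (halfShift c : ℝ) = c := by
  have : (halfShift c : ℝ) = 1/2 + c/4 := by
    simp only [halfShift, Set.coe_inclusion]
    rw [Set.projIcc_of_mem _ ⟨by linarith, by linarith⟩]
  rw [this, max_eq_left (by linarith), min_eq_left (by linarith)]
  ring

end NoMultiplierExtension

open NoMultiplierExtension in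
/-- With `g(t) := min (4·(t - 1/2)₊) t` on `(0,1]`, there is no *-homomorphism
`ψ : C_b(0,1] → C_b(0,1]` satisfying `ψ(f) = f ∘ g` (extending `f` by `0` at `0`)
for all `f ∈ C₀(0,1]`. -/
theorem no_multiplier_extension :
    ¬ ∃ ψ : (↥(Set.Ioc (0:ℝ) 1) →ᵇ ℂ) →⋆ₐ[ℂ] (↥(Set.Ioc (0:ℝ) 1) →ᵇ ℂ),
      ∀ f : C₀(↥(Set.Ioc (0:ℝ) 1), ℂ), ∀ t : ↥(Set.Ioc (0:ℝ) 1),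
        ψ f.toBCF t =
          if ht : min (4 * max ((t : ℝ) - 1/2) 0) (t : ℝ) ∈ Set.Ioc (0:ℝ) 1
          then f ⟨min (4 * max ((t : ℝ) - 1/2) 0) (t : ℝ), ht⟩ else 0 := by
  rintro ⟨ψ, hψ⟩
  have hψ_osc :
      ∀ c ∈ Set.Ioo (0:ℝ) (2/3), ψ oscillation (halfShift c) = exp (c⁻¹ * I) := by
    intro c hc
    have hmem : c ∈ Set.Ioc (0:ℝ) 1 := ⟨hc.1, by linarith [hc.2]⟩
    refine apply_eq_of_forall_zeroAtInfty ψ (x := ⟨c, hmem⟩) (fun f => ?_) oscillation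
    rw [hψ, dif_pos (by rwa [g_halfShift hc.1.le hc.2.le])]
    exact congrArg f (Subtype.ext (g_halfShift hc.1.le hc.2.le))
  refine not_tendsto_exp_inv_mul_I_nhdsGT_zero (ψ oscillation (halfShift 0)) ?_
  refine (((ψ oscillation).continuous.comp continuous_halfShift).tendsto 0).mono_left
    nhdsWithin_le_nhds |>.congr' ?_
  filter_upwards [Ioo_mem_nhdsGT (by norm_num : (0:ℝ) < 2/3)] with c hc
  exact hψ_osc c hc
end

section
/- Let A be a C*-algebra, a ∈ A₊ nonzero, γ ∈ (0, ‖a‖), and define φ(t) := ((t - γ)₊ / t)^{1/2} for t > 0, φ(0) := 0. Then e := φ(a) ∈ A is a positive contraction and e·a·e = (a - γ)₊. Moreover, for any d ∈ A the element s := e·d satisfies γ·s*s ≤ d*·(a - γ)₊·d, hence ‖s‖² ≤ γ^{-1}·(γ + ‖(a-γ)₊·d‖·‖d‖) and in particular if d is such that ‖d*(a-γ)₊d - (a-γ)₊‖ < γ then ‖s‖² ≤ ‖a‖/γ. -/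
/-!
With `φ(t) = ((t-γ)₊/t)^{1/2}` one has `0 ≤ φ ≤ 1`, `φ(t)² t = (t-γ)₊` and
`γ φ(t)² ≤ φ(t)² t`, so functional calculus gives `0 ≤ e ≤ 1`, `e a e = (a-γ)₊` and
`γ e² ≤ (a-γ)₊`. Conjugating the last inequality by `d` gives `γ (ed)*(ed) ≤ d*(a-γ)₊d`, and
the norm bounds follow from monotonicity of the norm on positive elements together with
`‖(a-γ)₊‖ ≤ ‖a‖ - γ`.
-/

namespace Real

variable {γ : ℝ}

theorem continuous_sqrt_max_sub_div (hγ : 0 < γ) :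
    Continuous fun t : ℝ => √(max (t - γ) 0 / t) := by
  -- the numerator vanishes for `t ≤ γ`, so the denominator may be replaced by `max t γ ≥ γ > 0`
  have hden (t : ℝ) : max (t - γ) 0 / t = max (t - γ) 0 / max t γ := by
    rcases le_total t γ with h | h
    · simp [max_eq_right (sub_nonpos.2 h)]
    · rw [max_eq_left h]
  simp_rw [hden]
  exact (Continuous.div (by fun_prop) (by fun_prop)
    fun t => (hγ.trans_le (le_max_right t γ)).ne').sqrt

theorem sqrt_max_sub_div_le_one (hγ : 0 ≤ γ) (t : ℝ) : √(max (t - γ) 0 / t) ≤ 1 := by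
  refine sqrt_le_one.2 ?_
  rcases le_or_gt t 0 with ht | ht
  · simp [max_eq_right (by linarith : t - γ ≤ 0)]
  · exact (div_le_one ht).2 (max_le (by linarith) ht.le)

theorem sq_sqrt_max_sub_div_mul (hγ : 0 ≤ γ) (t : ℝ) :
    √(max (t - γ) 0 / t) ^ 2 * t = max (t - γ) 0 := by
  rcases le_or_gt t 0 with ht | ht
  · simp [max_eq_right (by linarith : t - γ ≤ 0)]
  · rw [sq_sqrt (div_nonneg (le_max_right _ _) ht.le), div_mul_cancel₀ _ ht.ne']

theorem mul_sq_sqrt_max_sub_div_le (hγ : 0 ≤ γ) (t : ℝ) :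
    γ * √(max (t - γ) 0 / t) ^ 2 ≤ max (t - γ) 0 := by
  rcases le_or_gt t γ with ht | ht
  · simp [max_eq_right (sub_nonpos.2 ht)]
  · calc γ * √(max (t - γ) 0 / t) ^ 2 ≤ √(max (t - γ) 0 / t) ^ 2 * t := by
          rw [mul_comm]; exact mul_le_mul_of_nonneg_left ht.le (sq_nonneg _)
      _ = max (t - γ) 0 := sq_sqrt_max_sub_div_mul hγ t

end Real

theorem norm_star_mul_mul_le {A : Type*} [NonUnitalNormedRing A] [StarRing A] [NormedStarGroup A]
    (c d : A) : ‖star d * c * d‖ ≤ ‖c * d‖ * ‖d‖ := by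
  rw [mul_assoc, mul_comm _ ‖d‖, ← norm_star d]
  exact norm_mul_le _ _

section CStarAlgebra

variable {A : Type*} [NonUnitalCStarAlgebra A]

theorem cfcₙ_mul_mul_cfcₙ {f : ℝ → ℝ} {a : A} (hf : ContinuousOn f (quasispectrum ℝ a))
    (hf0 : f 0 = 0) (ha : IsSelfAdjoint a) :
    cfcₙ f a * a * cfcₙ f a = cfcₙ (fun t => f t * t * f t) a := by
  nth_rewrite 2 [← cfcₙ_id' ℝ a]
  rw [← cfcₙ_mul f (fun t => t) a, ← cfcₙ_mul (fun t => f t * t) f a (hf.mul continuousOn_id)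
    (by simp [hf0])]

theorem norm_cfcₙ_max_sub_le {a : A} {γ : ℝ} (ha : IsSelfAdjoint a) (hγ : γ ≤ ‖a‖) :
    ‖cfcₙ (fun t : ℝ => max (t - γ) 0) a‖ ≤ ‖a‖ - γ := by
  refine norm_cfcₙ_le fun t ht => ?_
  have hta : t ≤ ‖a‖ := (Real.le_norm_self t).trans
    (NonUnitalIsometricContinuousFunctionalCalculus.norm_quasispectrum_le a ht ha)
  rw [Real.norm_of_nonneg (le_max_right _ _)]
  exact max_le (by linarith) (by linarith)

variable [PartialOrder A] [StarOrderedRing A]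

theorem smul_cfcₙ_mul_self_le_cfcₙ {f g : ℝ → ℝ} {a : A} {γ : ℝ}
    (hfg : ∀ t ∈ quasispectrum ℝ a, γ * f t ^ 2 ≤ g t) (hf : ContinuousOn f (quasispectrum ℝ a))
    (hf0 : f 0 = 0) (hg : ContinuousOn g (quasispectrum ℝ a)) (hg0 : g 0 = 0) :
    γ • (cfcₙ f a * cfcₙ f a) ≤ cfcₙ g a := by
  rw [← cfcₙ_mul f f a, ← cfcₙ_smul γ (fun t => f t * f t) a (hf.mul hf) (by simp [hf0])]
  exact cfcₙ_mono (fun t ht => by simpa [sq] using hfg t ht)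
    (continuousOn_const.mul (hf.mul hf)) hg (by simp [hf0]) hg0

theorem smul_star_mul_self_le_conjugate {e c : A} {γ : ℝ} (he : IsSelfAdjoint e)
    (h : γ • (e * e) ≤ c) (d : A) : γ • (star (e * d) * (e * d)) ≤ star d * c * d := by
  have hconj : star (e * d) * (e * d) = star d * (e * e) * d := by
    rw [star_mul, he.star_eq]
    noncomm_ring
  rw [hconj, ← smul_mul_assoc, ← mul_smul_comm]
  exact star_left_conjugate_le_conjugate h d

theorem mul_sq_norm_le_of_smul_star_mul_self_le {s b : A} {γ : ℝ} (hγ : 0 ≤ γ)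
    (h : γ • (star s * s) ≤ b) : γ * ‖s‖ ^ 2 ≤ ‖b‖ := by
  have := CStarAlgebra.norm_le_norm_of_nonneg_of_le (smul_nonneg hγ (star_mul_self_nonneg s)) h
  rwa [norm_smul, Real.norm_of_nonneg hγ, CStarRing.norm_star_mul_self, ← sq] at this

end CStarAlgebra

theorem cutdown_contraction_control_general {A : Type*} [NonUnitalCStarAlgebra A] [PartialOrder A]
    [StarOrderedRing A] (a : A) (ha : 0 ≤ a) (γ : ℝ) (hγ0 : 0 < γ)
    (hγ : γ < ‖a‖) :
    letI e := cfcₙ (fun t : ℝ => Real.sqrt (max (t - γ) 0 / t)) a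
    letI aγ := cfcₙ (fun t : ℝ => max (t - γ) 0) a
    0 ≤ e ∧ ‖e‖ ≤ 1 ∧ e * a * e = aγ ∧
      (∀ d : A,
        γ • (star (e * d) * (e * d)) ≤ star d * aγ * d ∧
        ‖e * d‖ ^ 2 ≤ γ⁻¹ * (γ + ‖aγ * d‖ * ‖d‖) ∧
        (‖star d * aγ * d - aγ‖ < γ → ‖e * d‖ ^ 2 ≤ ‖a‖ / γ)) := by
  set e := cfcₙ (fun t : ℝ => √(max (t - γ) 0 / t)) a
  set aγ := cfcₙ (fun t : ℝ => max (t - γ) 0) a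
  have hφ := (Real.continuous_sqrt_max_sub_div hγ0).continuousOn (s := quasispectrum ℝ a)
  have hφ0 : √(max (0 - γ) 0 / 0) = 0 := by simp
  have he : 0 ≤ e := cfcₙ_nonneg fun t _ => Real.sqrt_nonneg _
  have hee : γ • (e * e) ≤ aγ :=
    smul_cfcₙ_mul_self_le_cfcₙ (fun t _ => Real.mul_sq_sqrt_max_sub_div_le hγ0.le t) hφ hφ0
      (by fun_prop) (by simp [hγ0.le])
  refine ⟨he, ?_, ?_, fun d => ?_⟩
  · refine norm_cfcₙ_le fun t _ => ?_
    rw [Real.norm_of_nonneg (Real.sqrt_nonneg _)]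
    exact Real.sqrt_max_sub_div_le_one hγ0.le t
  · rw [cfcₙ_mul_mul_cfcₙ hφ hφ0 ha.isSelfAdjoint]
    exact cfcₙ_congr fun t _ => by rw [mul_right_comm, ← sq, Real.sq_sqrt_max_sub_div_mul hγ0.le]
  have hed := smul_star_mul_self_le_conjugate he.isSelfAdjoint hee d
  have hnorm := mul_sq_norm_le_of_smul_star_mul_self_le hγ0.le hed
  refine ⟨hed, ?_, fun hd => ?_⟩
  · rw [le_inv_mul_iff₀ hγ0]
    linarith [norm_star_mul_mul_le aγ d]
  · rw [le_div_iff₀ hγ0]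
    linarith [norm_le_insert' (star d * aγ * d) aγ,
      norm_cfcₙ_max_sub_le ha.isSelfAdjoint hγ.le]

/-- For `0 ≠ a ≥ 0` in a C*-algebra and `0 < γ < ‖a‖`, the element
`e := φ(a)` with `φ(t) = ((t-γ)₊/t)^{1/2}` is a positive contraction with
`e·a·e = (a-γ)₊`; moreover for any `d`, `s := e·d` satisfies
`γ·s*s ≤ d*·(a-γ)₊·d`, hence `‖s‖² ≤ γ⁻¹(γ + ‖(a-γ)₊·d‖·‖d‖)`, and if
`‖d*(a-γ)₊d - (a-γ)₊‖ < γ` then `‖s‖² ≤ ‖a‖/γ`. -/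
theorem cutdown_contraction_control {A : Type*} [NonUnitalCStarAlgebra A] [PartialOrder A]
    [StarOrderedRing A] (a : A) (ha : 0 ≤ a) (ha0 : a ≠ 0) (γ : ℝ) (hγ0 : 0 < γ)
    (hγ : γ < ‖a‖) :
    letI e := cfcₙ (fun t : ℝ => Real.sqrt (max (t - γ) 0 / t)) a
    letI aγ := cfcₙ (fun t : ℝ => max (t - γ) 0) a
    0 ≤ e ∧ ‖e‖ ≤ 1 ∧ e * a * e = aγ ∧
      (∀ d : A,
        γ • (star (e * d) * (e * d)) ≤ star d * aγ * d ∧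
        ‖e * d‖ ^ 2 ≤ γ⁻¹ * (γ + ‖aγ * d‖ * ‖d‖) ∧
        (‖star d * aγ * d - aγ‖ < γ → ‖e * d‖ ^ 2 ≤ ‖a‖ / γ)) :=
  cutdown_contraction_control_general a ha γ hγ0 hγ
end
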